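/- arXiv:2307.06678 — 6 statements merged into one kernel-verified Lean document; each statement's English description precedes it below -/
import Mathlib

section
/- For any word w over a totally ordered alphabet, w has a unique Lyndon factorization: a unique expression as a concatenation of Lyndon words that is lexicographically non-increasing (Chen–Fox–Lyndon theorem). -/
/-- A nonempty word over a totally ordered alphabet is a Lyndon word if it is
lexicographically strictly smaller than each of its proper suffixes. -/
def IsLyndon {A : Type*} [LinearOrder A] (w : List A) : Prop :=
  w ≠ [] ∧ ∀ i, 0 < i → i < w.length → w < w.drop i

namespace ChenFoxLyndon

variable {A : Type*} [LinearOrder A]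

theorem lt_iff_lex {l m : List A} : l < m ↔ List.Lex (· < ·) l m := Iff.rfl

theorem lex_append_left_iff (u : List A) {x y : List A} :
    u ++ x < u ++ y ↔ x < y := by
  rw [lt_iff_lex, lt_iff_lex]
  induction u with
  | nil => rfl
  | cons a t ih =>
    constructor
    · intro h
      cases h with
      | cons h => exact ih.1 h
      | rel h => exact absurd h (lt_irrefl a)
    · intro h; exact List.Lex.cons (ih.2 h)

theorem prefix_le {l m : List A} (h : l <+: m) : l ≤ m := by
  obtain ⟨t, rfl⟩ := h
  cases t with
  | nil => simp
  | cons a t =>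
    apply le_of_lt
    rw [lt_iff_lex]
    induction l with
    | nil => exact List.Lex.nil
    | cons b l ih => exact List.Lex.cons ih

theorem lt_append_of_lt_not_prefix {u s : List A} (h : u < s) (hp : ¬ u <+: s)
    (x y : List A) : u ++ x < s ++ y := by
  rw [lt_iff_lex] at h ⊢
  induction h with
  | nil => exact absurd (List.nil_prefix) hp
  | @cons a l₁ l₂ h ih =>
    exact List.Lex.cons (ih (fun hpre => hp (List.cons_prefix_cons.2 ⟨rfl, hpre⟩)))
  | rel h => exact List.Lex.rel h

theorem append_lt_right {u v : List A} (hv : IsLyndon v) (hu : u ≠ [])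
    (huv : u < v) : u ++ v < v := by
  by_cases hp : u <+: v
  · obtain ⟨t, rfl⟩ := hp
    have ht : t ≠ [] := by rintro rfl; simp at huv
    rw [lex_append_left_iff]
    have h1 : 0 < u.length := List.length_pos_iff.2 hu
    have h2 : u.length < (u ++ t).length := by
      rw [List.length_append]; have := List.length_pos_iff.2 ht; omega
    have := hv.2 u.length h1 h2
    rwa [List.drop_left] at this
  · have := lt_append_of_lt_not_prefix huv hp v []
    simpa using this

theorem lyndon_append {u v : List A} (hu : IsLyndon u) (hv : IsLyndon v)
    (huv : u < v) : IsLyndon (u ++ v) := by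
  refine ⟨by simp [hu.1], fun i hi hilen => ?_⟩
  rw [List.drop_append]
  rcases lt_trichotomy i u.length with h | h | h
  · have hdrop : i - u.length = 0 := by omega
    rw [hdrop, List.drop_zero]
    refine lt_append_of_lt_not_prefix (hu.2 i hi h) ?_ v v
    intro hpre
    have := hpre.length_le
    simp at this; omega
  · subst h
    simp only [List.drop_length, Nat.sub_self, List.drop_zero, List.nil_append]
    exact append_lt_right hv hu.1 huv
  · have h1 : u.drop i = [] := List.drop_eq_nil_of_le (le_of_lt h)
    rw [h1, List.nil_append]
    have hlt : v < v.drop (i - u.length) := by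
      refine hv.2 _ (by omega) ?_
      rw [List.length_append] at hilen; omega
    calc u ++ v < v := append_lt_right hv hu.1 huv
      _ < v.drop (i - u.length) := hlt

theorem singleton_lyndon (a : A) : IsLyndon [a] :=
  ⟨by simp, fun i hi hlen => by simp at hlen; omega⟩

theorem insert_fact : ∀ (l : List (List A)), (∀ v ∈ l, IsLyndon v) →
    l.Chain' (fun a b => b ≤ a) → ∀ u, IsLyndon u →
    ∃ m : List (List A), (∀ v ∈ m, IsLyndon v) ∧ m.Chain' (fun a b => b ≤ a) ∧
      m.flatten = u ++ l.flatten := by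
  intro l
  induction l with
  | nil =>
    intro _ _ u hu
    exact ⟨[u], by simpa using hu, List.isChain_singleton u, by simp⟩
  | cons b rest ih =>
    intro hall hch u hu
    by_cases hb : b ≤ u
    · refine ⟨u :: b :: rest, ?_, ?_, by simp⟩
      · intro w hw
        rcases List.mem_cons.1 hw with rfl | hw2
        · exact hu
        · exact hall w hw2
      · exact List.isChain_cons_cons.2 ⟨hb, hch⟩
    · push_neg at hb
      have hmerge : IsLyndon (u ++ b) :=
        lyndon_append hu (hall b (by simp)) hb
      obtain ⟨m, hm1, hm2, hm3⟩ := ih (fun v hv => hall v (by simp [hv]))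
        hch.tail (u ++ b) hmerge
      exact ⟨m, hm1, hm2, by simp [hm3]⟩

theorem existence (w : List A) :
    ∃ l : List (List A), (∀ v ∈ l, IsLyndon v) ∧
      l.Chain' (fun a b => b ≤ a) ∧ l.flatten = w := by
  induction w with
  | nil => exact ⟨[], by simp, List.isChain_nil, rfl⟩
  | cons a t ih =>
    obtain ⟨m, h1, h2, h3⟩ := ih
    obtain ⟨m', h1', h2', h3'⟩ := insert_fact m h1 h2 [a] (singleton_lyndon a)
    exact ⟨m', h1', h2', by simp [h3', h3]⟩

theorem prefix_flatten : ∀ (m : List (List A)) (s : List A), s ≠ [] →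
    s <+: m.flatten → ∃ p x r q, m = p ++ x :: r ∧ q ≠ [] ∧ q <+: x ∧
      s = p.flatten ++ q := by
  intro m
  induction m with
  | nil =>
    intro s hs hpre
    simp only [List.flatten_nil, List.prefix_nil] at hpre
    exact absurd hpre hs
  | cons x m ih =>
    intro s hs hpre
    rw [List.flatten_cons] at hpre
    by_cases hlen : s.length ≤ x.length
    · refine ⟨[], x, m, s, rfl, hs, ?_, by simp⟩
      exact List.prefix_of_prefix_length_le hpre (List.prefix_append x m.flatten) hlen
    · push_neg at hlen
      have hx : x <+: s :=
        List.prefix_of_prefix_length_le (List.prefix_append x m.flatten) hpre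
          (le_of_lt hlen)
      obtain ⟨s', rfl⟩ := hx
      have hs' : s' ≠ [] := by
        intro h; subst h; simp at hlen
      have hpre' : s' <+: m.flatten := by
        obtain ⟨t, ht⟩ := hpre
        rw [List.append_assoc] at ht
        exact ⟨t, List.append_cancel_left ht⟩
      obtain ⟨p, x', r, q, hm, hq, hqx, hsq⟩ := ih s' hs' hpre'
      exact ⟨x :: p, x', r, q, by rw [hm]; rfl, hq, hqx, by simp [hsq]⟩

theorem first_aux {u v : List A} {t1 t2 : List (List A)}
    (hu : IsLyndon u) (hall2 : ∀ w ∈ v :: t2, IsLyndon w)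
    (hch2 : (v :: t2).Chain' (fun a b => b ≤ a))
    (heq : u ++ t1.flatten = v ++ t2.flatten) (hlen : v.length < u.length) :
    False := by
  have hv : IsLyndon v := hall2 v (by simp)
  -- v is a prefix of u
  have hvu : v <+: u :=
    List.prefix_of_prefix_length_le ⟨t2.flatten, heq.symm⟩
      (List.prefix_append u t1.flatten) (le_of_lt hlen)
  obtain ⟨u', rfl⟩ := hvu
  have hu' : u' ≠ [] := by
    intro h; subst h; simp at hlen
  have hpre' : u' <+: t2.flatten := by
    rw [List.append_assoc] at heq
    have := List.append_cancel_left heq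
    exact ⟨t1.flatten, this⟩
  obtain ⟨p, x, r, q, hm, hq, hqx, hsq⟩ := prefix_flatten t2 u' hu' hpre'
  subst hsq
  -- q is a proper nonempty suffix of u = v ++ p.flatten ++ q
  have hdrop : (v ++ (p.flatten ++ q)).drop (v ++ p.flatten).length = q := by
    rw [← List.append_assoc]
    exact List.drop_left
  have hqlt : v ++ (p.flatten ++ q) < q := by
    have hi : 0 < (v ++ p.flatten).length := by
      rw [List.length_append]; have := List.length_pos_iff.2 hv.1; omega
    have hilen : (v ++ p.flatten).length < (v ++ (p.flatten ++ q)).length := by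
      have hq' := List.length_pos_iff.2 hq
      simp only [List.length_append]; omega
    have := hu.2 (v ++ p.flatten).length hi hilen
    rwa [hdrop] at this
  -- but q ≤ x ≤ v ≤ u
  have hqx' : q ≤ x := prefix_le hqx
  have hxv : x ≤ v := by
    have hpw : (v :: t2).Pairwise (fun a b => b ≤ a) :=
      (List.isChain_iff_pairwise (R := (· ≥ ·))).1 hch2
    exact List.rel_of_pairwise_cons hpw (by rw [hm]; simp)
  have hvu2 : v ≤ v ++ (p.flatten ++ q) := prefix_le (List.prefix_append _ _)
  exact absurd (lt_of_lt_of_le hqlt (le_trans hqx' (le_trans hxv hvu2)))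
    (lt_irrefl _)

theorem first_eq {u v : List A} {t1 t2 : List (List A)}
    (hall1 : ∀ w ∈ u :: t1, IsLyndon w) (hall2 : ∀ w ∈ v :: t2, IsLyndon w)
    (hch1 : (u :: t1).Chain' (fun a b => b ≤ a))
    (hch2 : (v :: t2).Chain' (fun a b => b ≤ a))
    (heq : u ++ t1.flatten = v ++ t2.flatten) : u = v := by
  rcases lt_trichotomy u.length v.length with h | h | h
  · exact absurd (first_aux (hall2 v (by simp)) hall1 hch1 heq.symm h) id
  · have : u = (u ++ t1.flatten).take u.length := by rw [List.take_left]
    rw [this, heq, h, List.take_left]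
  · exact absurd (first_aux (hall1 u (by simp)) hall2 hch2 heq h) id

theorem uniqueness : ∀ (l1 l2 : List (List A)),
    (∀ v ∈ l1, IsLyndon v) → l1.Chain' (fun a b => b ≤ a) →
    (∀ v ∈ l2, IsLyndon v) → l2.Chain' (fun a b => b ≤ a) →
    l1.flatten = l2.flatten → l1 = l2 := by
  intro l1
  induction l1 with
  | nil =>
    intro l2 _ _ hall2 _ heq
    cases l2 with
    | nil => rfl
    | cons v t =>
      exfalso
      simp only [List.flatten_nil, List.flatten_cons] at heq
      exact (hall2 v (by simp)).1 (List.append_eq_nil_iff.1 heq.symm).1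
  | cons u t1 ih =>
    intro l2 hall1 hch1 hall2 hch2 heq
    cases l2 with
    | nil =>
      exfalso
      simp only [List.flatten_cons, List.flatten_nil] at heq
      exact (hall1 u (by simp)).1 (List.append_eq_nil_iff.1 heq).1
    | cons v t2 =>
      simp only [List.flatten_cons] at heq
      have huv : u = v := first_eq hall1 hall2 hch1 hch2 heq
      subst huv
      have htl : t1.flatten = t2.flatten := List.append_cancel_left heq
      have := ih t2 (fun w hw => hall1 w (by simp [hw])) hch1.tail
        (fun w hw => hall2 w (by simp [hw])) hch2.tail htl
      rw [this]

end ChenFoxLyndon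

/-- **Chen–Fox–Lyndon theorem**: every word has a unique expression as a
lexicographically non-increasing concatenation of Lyndon words. -/
theorem chen_fox_lyndon {A : Type*} [LinearOrder A] (w : List A) :
    ∃! l : List (List A),
      (∀ v ∈ l, IsLyndon v) ∧ l.Chain' (fun a b => b ≤ a) ∧ l.flatten = w := by
  obtain ⟨l, h1, h2, h3⟩ := ChenFoxLyndon.existence w
  refine ⟨l, ⟨h1, h2, h3⟩, ?_⟩
  rintro y ⟨hy1, hy2, hy3⟩
  exact ChenFoxLyndon.uniqueness y l hy1 hy2 h1 h2 (by rw [hy3, h3])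
end

section
/- For every permutation w of {1,...,ℓ} (viewed as a word), the Lyndon words appearing in the Lyndon factorization of w are pairwise distinct, and their number equals the number of left-to-right minima of w (i.e., positions i such that w_i < w_j for all j < i). -/
lemma head_le_of_cons_le {a b : ℕ} {as bs : List ℕ}
    (h : (b :: bs : List ℕ) ≤ (a :: as)) : b ≤ a := by
  by_contra hab
  push_neg at hab
  exact absurd (show (a :: as : List ℕ) < (b :: bs) from List.Lex.rel hab) (not_lt.2 h)

lemma lyndon_min (v : List ℕ) (hL : IsLyndon v) (hnd : v.Nodup) :
    ∀ i, 0 < i → i < v.length → v.getD 0 0 < v.getD i 0 := by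
  intro i hi hlen
  have h := hL.2 i hi hlen
  have h1 := List.head!_le_of_lt (v.drop i) v h hL.1
  have hd : v.drop i ≠ [] := by
    rw [← List.length_pos_iff]
    simp
    omega
  obtain ⟨a, as, ha⟩ := List.exists_cons_of_ne_nil hL.1
  have hda : (v.drop i).head! = v.getD i 0 := by
    rw [List.drop_eq_getElem_cons hlen, List.getD_eq_getElem _ _ hlen]
    rfl
  have h0 : v.head! = v.getD 0 0 := by rw [ha]; simp
  rw [hda, h0] at h1
  refine lt_of_le_of_ne h1 ?_
  have hpos : 0 < v.length := by omega
  rw [List.getD_eq_getElem _ _ hlen, List.getD_eq_getElem _ _ hpos]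
  intro hc
  have := (hnd.getElem_inj_iff).1 hc
  omega

lemma count_minima_append (v u : List ℕ) (hv : v ≠ [])
    (hmin : ∀ i, 0 < i → i < v.length → v.getD 0 0 < v.getD i 0)
    (hlt : ∀ x ∈ v, u ≠ [] → u.getD 0 0 < x) :
    ((Finset.range (v ++ u).length).filter
      (fun i => ∀ j < i, (v ++ u).getD i 0 < (v ++ u).getD j 0)).card
    = 1 + ((Finset.range u.length).filter
      (fun i => ∀ j < i, u.getD i 0 < u.getD j 0)).card := by
  have hvpos : 0 < v.length := List.length_pos_iff.2 hv
  have hset : ((Finset.range (v ++ u).length).filter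
      (fun i => ∀ j < i, (v ++ u).getD i 0 < (v ++ u).getD j 0))
      = insert 0 (((Finset.range u.length).filter
        (fun i => ∀ j < i, u.getD i 0 < u.getD j 0)).image (· + v.length)) := by
    ext i
    simp only [Finset.mem_insert, Finset.mem_image, Finset.mem_filter, Finset.mem_range,
      List.length_append]
    constructor
    · rintro ⟨hilt, hP⟩
      rcases lt_or_ge i v.length with hiv | hiv
      · left
        by_contra h0
        have hpos : 0 < i := Nat.pos_of_ne_zero h0
        have h2 := hP 0 hpos
        rw [List.getD_append _ _ _ _ hiv, List.getD_append _ _ _ _ hvpos] at h2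
        exact absurd h2 (not_lt.2 (hmin i hpos hiv).le)
      · right
        refine ⟨i - v.length, ⟨by omega, ?_⟩, by omega⟩
        intro j hj
        have h2 := hP (j + v.length) (by omega)
        rw [List.getD_append_right _ _ _ _ hiv,
          List.getD_append_right _ _ _ _ (by omega : v.length ≤ j + v.length)] at h2
        simpa using h2
    · rintro (rfl | ⟨i', ⟨hi'u, hP⟩, rfl⟩)
      · exact ⟨by omega, fun j hj => absurd hj (Nat.not_lt_zero j)⟩
      · have hune : u ≠ [] := by
          intro h; rw [h] at hi'u; simp at hi'u
        have hle : u.getD i' 0 ≤ u.getD 0 0 := by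
          rcases Nat.eq_zero_or_pos i' with rfl | hpos
          · exact le_refl _
          · exact (hP 0 hpos).le
        refine ⟨by omega, fun j hj => ?_⟩
        rw [List.getD_append_right _ _ _ _ (by omega : v.length ≤ i' + v.length)]
        have hii : i' + v.length - v.length = i' := by omega
        rw [hii]
        rcases lt_or_ge j v.length with hjv | hjv
        · rw [List.getD_append _ _ _ _ hjv]
          have hxmem : v.getD j 0 ∈ v := by
            rw [List.getD_eq_getElem _ _ hjv]; exact List.getElem_mem _
          exact lt_of_le_of_lt hle (hlt _ hxmem hune)
        · rw [List.getD_append_right _ _ _ _ hjv]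
          exact hP (j - v.length) (by omega)
  rw [hset, Finset.card_insert_of_notMem, Finset.card_image_of_injective _
    (add_left_injective _)]
  · omega
  · simp only [Finset.mem_image, Finset.mem_filter, Finset.mem_range, not_exists]
    rintro x ⟨-, h⟩
    omega

lemma lyndon_factorization_aux (l : List (List ℕ)) (hnodup : l.flatten.Nodup)
    (hLyndon : ∀ v ∈ l, IsLyndon v) (hchain : l.Chain' (fun a b => b ≤ a)) :
    l.Nodup ∧ l.length = ((Finset.range l.flatten.length).filter
      (fun i => ∀ j < i, l.flatten.getD i 0 < l.flatten.getD j 0)).card := by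
  induction l with
  | nil => simp; rfl
  | cons v l ih =>
    simp only [List.flatten_cons] at hnodup ⊢
    have hvL := hLyndon v List.mem_cons_self
    have hvne := hvL.1
    rw [List.nodup_append] at hnodup
    obtain ⟨hvnd, hund, hdisj⟩ := hnodup
    obtain ⟨ihnd, ihlen⟩ := ih hund (fun x hx => hLyndon x (List.mem_cons_of_mem _ hx))
      hchain.tail
    have hvpos : 0 < v.length := List.length_pos_iff.2 hvne
    constructor
    · refine List.nodup_cons.2 ⟨?_, ihnd⟩
      intro hvmem
      have h1 : v.getD 0 0 ∈ v := by
        rw [List.getD_eq_getElem _ _ hvpos]; exact List.getElem_mem _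
      exact hdisj (v.getD 0 0) h1 (v.getD 0 0) (List.mem_flatten.2 ⟨v, hvmem, h1⟩) rfl
    · rw [List.length_cons, ihlen,
        count_minima_append v l.flatten hvne (lyndon_min v hvL hvnd) ?_]
      · omega
      · intro x hx hne
        obtain ⟨v₂, l₂, rfl⟩ := List.exists_cons_of_ne_nil
          (by rintro rfl; simp at hne : l ≠ [])
        have hv₂ne := (hLyndon v₂ (by simp)).1
        have hv₂pos : 0 < v₂.length := List.length_pos_iff.2 hv₂ne
        have hflat : (v₂ :: l₂).flatten.getD 0 0 = v₂.getD 0 0 := by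
          rw [List.flatten_cons, List.getD_append _ _ _ _ hv₂pos]
        rw [hflat]
        -- v₂.getD 0 0 < v.getD 0 0
        have hchain1 : v₂ ≤ v := (List.isChain_cons_cons.1 hchain).1
        obtain ⟨a, as, ha⟩ := List.exists_cons_of_ne_nil hvne
        obtain ⟨b, bs, hb⟩ := List.exists_cons_of_ne_nil hv₂ne
        have hba : b ≤ a := head_le_of_cons_le (by rw [← ha, ← hb]; exact hchain1)
        have hbmem : b ∈ (v₂ :: l₂).flatten := by
          rw [List.flatten_cons, hb]; simp
        have hamem : a ∈ v := by rw [ha]; simp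
        have hbne : b ≠ a := by
          intro h; exact hdisj a hamem a (h ▸ hbmem) rfl
        have hblt : b < a := lt_of_le_of_ne hba hbne
        have hb0 : v₂.getD 0 0 = b := by rw [hb]; simp
        have ha0 : v.getD 0 0 = a := by rw [ha]; simp
        rw [hb0]
        -- now b < x for x ∈ v
        obtain ⟨n, hn, rfl⟩ := List.getElem_of_mem hx
        rcases Nat.eq_zero_or_pos n with rfl | hnpos
        · calc b < a := hblt
            _ = v[0] := by rw [← List.getD_eq_getElem v 0 hn, ha0]
        · calc b < a := hblt
            _ = v.getD 0 0 := ha0.symm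
            _ < v.getD n 0 := lyndon_min v hvL hvnd n hnpos hn
            _ = v[n] := List.getD_eq_getElem _ _ hn

/-- For a permutation of `{1, ..., ℓ}` viewed as a word, the Lyndon words in its
Lyndon factorization are pairwise distinct, and their number equals the number of
left-to-right minima of the word. -/
theorem lyndon_factorization_of_permutation (ℓ : ℕ) (w : List ℕ)
    (hnodup : w.Nodup) (hmem : ∀ x, x ∈ w ↔ x ∈ Finset.Icc 1 ℓ)
    (l : List (List ℕ)) (hLyndon : ∀ v ∈ l, IsLyndon v)
    (hchain : l.Chain' (fun a b => b ≤ a)) (hjoin : l.flatten = w) :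
    l.Nodup ∧ l.length = ((Finset.range w.length).filter
      (fun i => ∀ j < i, w.getD i 0 < w.getD j 0)).card := by
  subst hjoin
  exact lyndon_factorization_aux l hnodup hLyndon hchain
end

section
/- In the formal power series ring ℚ⟦p_1, p_2, ...⟧ (power sums as free generators of symmetric functions over ℚ), the sum over all partitions μ of ∏_{i=1}^{ℓ} ∏_{j=1}^{ℓ(μ)} 1/(1 − t_i^{μ_j}) · p_μ/z_μ equals ∏_{j ∈ ℕ^ℓ} H(t_1^{j_1}⋯t_ℓ^{j_ℓ}), where H(u) = exp(∑_{k≥1} p_k u^k / k). -/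
/-- The product topology on multivariate power series over `ℚ`. -/
noncomputable instance {σ : Type*} : TopologicalSpace (MvPowerSeries σ ℚ) :=
  Pi.topologicalSpace


set_option linter.unusedSectionVars false
set_option linter.unusedVariables false
set_option linter.unusedTactic false

open MvPowerSeries Finset

section Generic

variable {σ : Type*} {ι : Type*}

noncomputable instance : T2Space (MvPowerSeries σ ℚ) :=
  inferInstanceAs (T2Space ((σ →₀ ℕ) → ℚ))

theorem hasSum_iff_coeff {f : ι → MvPowerSeries σ ℚ} {L : MvPowerSeries σ ℚ} :
    HasSum f L ↔ ∀ n, HasSum (fun i => coeff n (f i)) (coeff n L) := by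
  rw [HasSum, SummationFilter.unconditional_filter]; refine tendsto_pi_nhds.trans ?_
  refine forall_congr' fun n => ?_
  rw [HasSum, SummationFilter.unconditional_filter]
  refine Filter.tendsto_congr fun s => ?_
  exact map_sum (coeff n) f s

theorem hasProd_of_ev {f : ι → MvPowerSeries σ ℚ} {L : MvPowerSeries σ ℚ}
    (h : ∀ n, ∃ S : Finset ι, ∀ F : Finset ι, S ⊆ F →
      coeff n (∏ i ∈ F, f i) = coeff n L) : HasProd f L := by
  rw [HasProd, SummationFilter.unconditional_filter]; refine tendsto_pi_nhds.2 ?_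
  intro n
  obtain ⟨S, hS⟩ := h n
  refine Filter.Tendsto.congr' ?_
    (tendsto_const_nhds : Filter.Tendsto (fun _ => L n) Filter.atTop _)
  filter_upwards [Filter.eventually_ge_atTop S] with F hF
  exact (hS F hF).symm

theorem hasSum_of_ev {f : ι → MvPowerSeries σ ℚ} {L : MvPowerSeries σ ℚ}
    (h : ∀ n, ∃ S : Finset ι, (∀ i ∉ S, coeff n (f i) = 0) ∧
      coeff n L = ∑ i ∈ S, coeff n (f i)) : HasSum f L := by
  rw [hasSum_iff_coeff]
  intro n
  obtain ⟨S, h0, hL⟩ := h n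
  rw [hL]
  exact hasSum_sum_of_ne_finset_zero h0

variable [DecidableEq σ]

/-- total degree of a monomial -/
def dw (n : σ →₀ ℕ) : ℕ := n.sum fun _ e => e

theorem dw_add (p q : σ →₀ ℕ) : dw (p + q) = dw p + dw q :=
  Finsupp.sum_add_index' (fun _ => rfl) (fun _ _ _ => rfl)

theorem dw_mono {p q : σ →₀ ℕ} (h : p ≤ q) : dw p ≤ dw q := by
  obtain ⟨r, rfl⟩ := le_iff_exists_add.mp h
  rw [dw_add]; exact Nat.le_add_right _ _

theorem dw_single (s : σ) (e : ℕ) : dw (Finsupp.single s e) = e :=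
  Finsupp.sum_single_index rfl

theorem dw_eq_zero {p : σ →₀ ℕ} (h : dw p = 0) : p = 0 := by
  ext s
  by_cases hs : s ∈ p.support
  · exact Nat.eq_zero_of_le_zero (h ▸ Finset.single_le_sum (f := fun s => p s)
      (fun _ _ => Nat.zero_le _) hs)
  · simpa using Finsupp.notMem_support_iff.mp hs

/-- `g` has all coefficients of total degree `< N` vanishing. -/
def Zd (N : ℕ) (g : MvPowerSeries σ ℚ) : Prop := ∀ p, dw p < N → coeff p g = 0

/-- `g` has all coefficients `≤ n` vanishing. -/
def Zc (n : σ →₀ ℕ) (g : MvPowerSeries σ ℚ) : Prop := ∀ p ≤ n, coeff p g = 0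

theorem Zd.mono {M N : ℕ} (h : M ≤ N) {g : MvPowerSeries σ ℚ} (hg : Zd N g) : Zd M g :=
  fun p hp => hg p (lt_of_lt_of_le hp h)

theorem Zd.zc {N : ℕ} {n : σ →₀ ℕ} (h : dw n < N) {g : MvPowerSeries σ ℚ} (hg : Zd N g) :
    Zc n g := fun p hp => hg p (lt_of_le_of_lt (dw_mono hp) h)

theorem Zd.mul {M N : ℕ} {a b : MvPowerSeries σ ℚ} (ha : Zd M a) (hb : Zd N b) :
    Zd (M + N) (a * b) := by
  intro p hp
  rw [coeff_mul]
  refine Finset.sum_eq_zero fun q hq => ?_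
  rw [Finset.HasAntidiagonal.mem_antidiagonal] at hq
  have : dw q.1 + dw q.2 < M + N := by rw [← dw_add, hq]; exact hp
  rcases Nat.lt_or_ge (dw q.1) M with h1 | h1
  · rw [ha q.1 h1, zero_mul]
  · rw [hb q.2 (by omega), mul_zero]

theorem Zd_zero_any (a : MvPowerSeries σ ℚ) : Zd 0 a := fun p hp => absurd hp (Nat.not_lt_zero _)

theorem Zd.mul_left {N : ℕ} (a : MvPowerSeries σ ℚ) {b : MvPowerSeries σ ℚ} (hb : Zd N b) :
    Zd N (a * b) := by simpa using (Zd_zero_any a).mul hb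

theorem Zd.smul {N : ℕ} (r : ℚ) {b : MvPowerSeries σ ℚ} (hb : Zd N b) : Zd N (r • b) := by
  intro p hp; rw [coeff_smul, hb p hp, mul_zero]

theorem Zd_one_of_constantCoeff {f : MvPowerSeries σ ℚ} (h : constantCoeff f = 0) :
    Zd 1 f := by
  intro p hp
  have : p = 0 := dw_eq_zero (by omega)
  rw [this, coeff_zero_eq_constantCoeff]; exact h

theorem Zd.pow {f : MvPowerSeries σ ℚ} (h : constantCoeff f = 0) (j : ℕ) : Zd j (f ^ j) := by
  induction j with
  | zero => exact Zd_zero_any _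
  | succ k ih =>
    rw [pow_succ]
    exact ih.mul (Zd_one_of_constantCoeff h)

theorem Zd_X (s : σ) : Zd 1 (X s : MvPowerSeries σ ℚ) :=
  Zd_one_of_constantCoeff (constantCoeff_X s)

theorem Zd_X_pow (s : σ) (c : ℕ) : Zd c ((X s : MvPowerSeries σ ℚ) ^ c) :=
  Zd.pow (constantCoeff_X s) c

theorem Zd.prod {s : Finset ι} {w : ι → ℕ} {g : ι → MvPowerSeries σ ℚ}
    (h : ∀ i ∈ s, Zd (w i) (g i)) : Zd (∑ i ∈ s, w i) (∏ i ∈ s, g i) := by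
  classical
  induction s using Finset.induction_on with
  | empty => simpa using Zd_zero_any 1
  | insert a s' hnot ih =>
    rw [Finset.sum_insert hnot, Finset.prod_insert hnot]
    exact (h a (Finset.mem_insert_self _ _)).mul (ih fun i hi => h i (Finset.mem_insert_of_mem hi))

theorem Zc.mul_left {n : σ →₀ ℕ} (a : MvPowerSeries σ ℚ) {b : MvPowerSeries σ ℚ} (hb : Zc n b) :
    Zc n (a * b) := by
  intro p hp
  rw [coeff_mul]
  refine Finset.sum_eq_zero fun q hq => ?_
  rw [Finset.HasAntidiagonal.mem_antidiagonal] at hq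
  rw [hb q.2 (le_trans (hq ▸ le_add_self) hp), mul_zero]

theorem Zc.mul_right {n : σ →₀ ℕ} {a : MvPowerSeries σ ℚ} (b : MvPowerSeries σ ℚ)
    (ha : Zc n a) : Zc n (a * b) := by
  intro p hp
  rw [coeff_mul]
  refine Finset.sum_eq_zero fun q hq => ?_
  rw [Finset.HasAntidiagonal.mem_antidiagonal] at hq
  rw [ha q.1 (le_trans (hq ▸ le_self_add) hp), zero_mul]

theorem Zc.smul {n : σ →₀ ℕ} (r : ℚ) {b : MvPowerSeries σ ℚ} (hb : Zc n b) : Zc n (r • b) := by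
  intro p hp; rw [coeff_smul, hb p hp, mul_zero]

theorem Zc_X_mul {n : σ →₀ ℕ} {s : σ} (hs : n s = 0) (y : MvPowerSeries σ ℚ) :
    Zc n ((X s : MvPowerSeries σ ℚ) * y) := by
  intro p hp
  rw [coeff_mul]
  refine Finset.sum_eq_zero fun q hq => ?_
  rw [Finset.HasAntidiagonal.mem_antidiagonal] at hq
  rw [coeff_X]
  split
  · rename_i h
    exfalso
    have h1 : q.1 s = 1 := by rw [h, Finsupp.single_eq_same]
    have h2 : q.1 ≤ n := le_trans (hq ▸ le_self_add) hp
    have := h2 s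
    omega
  · rw [zero_mul]

/-- congruence of coefficients up to monomial `n` -/
def Eqn (n : σ →₀ ℕ) (a b : MvPowerSeries σ ℚ) : Prop := ∀ p ≤ n, coeff p a = coeff p b

theorem Eqn.refl (n : σ →₀ ℕ) (a : MvPowerSeries σ ℚ) : Eqn n a a := fun _ _ => rfl

theorem Eqn.symm {n : σ →₀ ℕ} {a b : MvPowerSeries σ ℚ} (h : Eqn n a b) : Eqn n b a :=
  fun p hp => (h p hp).symm

theorem Eqn.trans {n : σ →₀ ℕ} {a b c : MvPowerSeries σ ℚ} (h : Eqn n a b) (h' : Eqn n b c) :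
    Eqn n a c := fun p hp => (h p hp).trans (h' p hp)

theorem Eqn.mul {n : σ →₀ ℕ} {a a' b b' : MvPowerSeries σ ℚ} (ha : Eqn n a a')
    (hb : Eqn n b b') : Eqn n (a * b) (a' * b') := by
  intro p hp
  rw [coeff_mul, coeff_mul]
  refine Finset.sum_congr rfl fun q hq => ?_
  rw [Finset.HasAntidiagonal.mem_antidiagonal] at hq
  rw [ha q.1 (le_trans (hq ▸ le_self_add) hp), hb q.2 (le_trans (hq ▸ le_add_self) hp)]

theorem Eqn.pow {n : σ →₀ ℕ} {a a' : MvPowerSeries σ ℚ} (ha : Eqn n a a') (c : ℕ) :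
    Eqn n (a ^ c) (a' ^ c) := by
  induction c with
  | zero => simpa using Eqn.refl n 1
  | succ k ih => rw [pow_succ, pow_succ]; exact ih.mul ha

theorem Eqn.smul {n : σ →₀ ℕ} {a a' : MvPowerSeries σ ℚ} (ha : Eqn n a a') (r : ℚ) :
    Eqn n (r • a) (r • a') := by
  intro p hp; rw [coeff_smul, coeff_smul, ha p hp]

theorem Eqn.sum {n : σ →₀ ℕ} {s : Finset ι} {f g : ι → MvPowerSeries σ ℚ}
    (h : ∀ i ∈ s, Eqn n (f i) (g i)) : Eqn n (∑ i ∈ s, f i) (∑ i ∈ s, g i) := by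
  intro p hp
  rw [map_sum, map_sum]
  exact Finset.sum_congr rfl fun i hi => h i hi p hp

theorem Eqn.prod {n : σ →₀ ℕ} {s : Finset ι} {f g : ι → MvPowerSeries σ ℚ}
    (h : ∀ i ∈ s, Eqn n (f i) (g i)) : Eqn n (∏ i ∈ s, f i) (∏ i ∈ s, g i) := by
  classical
  induction s using Finset.induction_on with
  | empty => simpa using Eqn.refl n 1
  | insert a s' hnot ih =>
    rw [Finset.prod_insert hnot, Finset.prod_insert hnot]
    exact (h a (Finset.mem_insert_self _ _)).mul (ih fun i hi => h i (Finset.mem_insert_of_mem hi))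

theorem Eqn.add_zc {n : σ →₀ ℕ} {x z : MvPowerSeries σ ℚ} (hz : Zc n z) : Eqn n (x + z) x := by
  intro p hp; rw [map_add, hz p hp, add_zero]

/-- local finiteness: for each monomial, all but finitely many members of the family
are `Zc n`. -/
def LF (f : ι → MvPowerSeries σ ℚ) : Prop := ∀ n : σ →₀ ℕ, {i | ¬ Zc n (f i)}.Finite

theorem LF.hasSum {f : ι → MvPowerSeries σ ℚ} (h : LF f) : HasSum f (∑' i, f i) := by
  have : Summable f := by
    refine ⟨fun n => ∑ i ∈ (h n).toFinset, coeff n (f i), hasSum_of_ev fun n => ?_⟩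
    refine ⟨(h n).toFinset, fun i hi => ?_, ?_⟩
    · have : Zc n (f i) := by simpa using (Set.Finite.mem_toFinset (h n)).not.mp hi
      exact this n le_rfl
    · rfl
  exact this.hasSum

theorem LF.coeff_tsum {f : ι → MvPowerSeries σ ℚ} (h : LF f) {n p : σ →₀ ℕ} (hp : p ≤ n)
    (S : Finset ι) (hS : ∀ i ∉ S, Zc n (f i)) :
    coeff p (∑' i, f i) = ∑ i ∈ S, coeff p (f i) := by
  have h1 : HasSum (fun i => coeff p (f i)) (coeff p (∑' i, f i)) :=
    hasSum_iff_coeff.mp h.hasSum p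
  have h2 : HasSum (fun i => coeff p (f i)) (∑ i ∈ S, coeff p (f i)) :=
    hasSum_sum_of_ne_finset_zero (fun i hi => hS i hi p hp)
  exact h1.unique h2

theorem LF.eqn {f : ι → MvPowerSeries σ ℚ} (h : LF f) (n : σ →₀ ℕ)
    (S : Finset ι) (hS : ∀ i ∉ S, Zc n (f i)) :
    Eqn n (∑' i, f i) (∑ i ∈ S, f i) := by
  intro p hp
  rw [h.coeff_tsum hp S hS, map_sum]

theorem LF.constantCoeff_tsum {f : ι → MvPowerSeries σ ℚ}
    (h : LF f) (h0 : ∀ i, constantCoeff (f i) = 0) :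
    constantCoeff (∑' i, f i) = 0 := by
  rw [← coeff_zero_eq_constantCoeff_apply,
    h.coeff_tsum le_rfl ∅ (fun i _ => fun p hp => by
      obtain rfl : p = (0 : σ →₀ ℕ) := le_antisymm hp zero_le
      rw [coeff_zero_eq_constantCoeff_apply, h0 i]),
    Finset.sum_empty]

end Generic

/-- The completed ring of symmetric power series `ℚ⟦p_1, p_2, ...⟧` with the variables
`t_1, ..., t_ℓ` adjoined: the generator `Sum.inl k` is the power sum `p_{k+1}` and the
generator `Sum.inr i` is the variable `t_i`. -/
noncomputable abbrev SymT (ℓ : ℕ) : Type := MvPowerSeries (ℕ ⊕ Fin ℓ) ℚ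

/-- The power sum `p_{k+1}`. -/
noncomputable def Pv (ℓ k : ℕ) : SymT ℓ := MvPowerSeries.X (Sum.inl k)

/-- The variable `t_i`. -/
noncomputable def Tv (ℓ : ℕ) (i : Fin ℓ) : SymT ℓ := MvPowerSeries.X (Sum.inr i)

/-- The exponential `exp f = ∑_j f^j / j!` (a convergent sum, coefficientwise, when
`f` has zero constant term). -/
noncomputable def mexp (ℓ : ℕ) (f : SymT ℓ) : SymT ℓ :=
  ∑' j : ℕ, ((j.factorial : ℚ))⁻¹ • f ^ j

variable {ℓ : ℕ}

theorem LF_mexp_family {f : SymT ℓ} (hf : constantCoeff f = 0) :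
    LF (fun j : ℕ => ((j.factorial : ℚ))⁻¹ • f ^ j) := by
  intro n
  refine Set.Finite.subset (Set.finite_Iic (dw n)) fun j hj => ?_
  simp only [Set.mem_setOf_eq] at hj
  by_contra hlt
  simp only [Set.mem_Iic, not_le] at hlt
  exact hj (((Zd.pow hf j).smul _).zc hlt)

theorem mexp_hasSum {f : SymT ℓ} (hf : constantCoeff f = 0) :
    HasSum (fun j : ℕ => ((j.factorial : ℚ))⁻¹ • f ^ j) (mexp ℓ f) :=
  (LF_mexp_family hf).hasSum

theorem mexp_trunc {f : SymT ℓ} (hf : constantCoeff f = 0) (n : (ℕ ⊕ Fin ℓ) →₀ ℕ) :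
    Eqn n (mexp ℓ f) (∑ c ∈ Finset.range (dw n + 1), ((c.factorial : ℚ))⁻¹ • f ^ c) := by
  refine (LF_mexp_family hf).eqn n _ fun c hc => ?_
  simp only [Finset.mem_range, not_lt] at hc
  exact ((Zd.pow hf c).smul _).zc (by omega)

theorem mexp_eqn {a b : SymT ℓ} (ha : constantCoeff a = 0) (hb : constantCoeff b = 0)
    {n : (ℕ ⊕ Fin ℓ) →₀ ℕ} (h : Eqn n a b) : Eqn n (mexp ℓ a) (mexp ℓ b) := by
  refine ((mexp_trunc ha n).trans ?_).trans (mexp_trunc hb n).symm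
  exact Eqn.sum fun c _ => (h.pow c).smul _

theorem inv_fact_choose {k j : ℕ} (h : k ≤ j) :
    ((j.factorial : ℚ))⁻¹ * (j.choose k : ℚ) =
      ((k.factorial : ℚ))⁻¹ * (((j - k).factorial : ℚ))⁻¹ := by
  have := Nat.choose_mul_factorial_mul_factorial h
  have h2 : (j.choose k : ℚ) * (k.factorial : ℚ) * ((j - k).factorial : ℚ) = (j.factorial : ℚ) := by
    exact_mod_cast congrArg (Nat.cast : ℕ → ℚ) this
  have f1 : (j.factorial : ℚ) ≠ 0 := Nat.cast_ne_zero.mpr (Nat.factorial_ne_zero j)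
  have f2 : (k.factorial : ℚ) ≠ 0 := Nat.cast_ne_zero.mpr (Nat.factorial_ne_zero k)
  have f3 : (((j - k).factorial : ℚ)) ≠ 0 := Nat.cast_ne_zero.mpr (Nat.factorial_ne_zero _)
  field_simp
  linarith [h2]

/-- triangle reindexing -/
theorem tri_sum {M : Type*} [AddCommMonoid M] (N : ℕ) (g : ℕ → ℕ → M) :
    ∑ j ∈ Finset.range (N + 1), ∑ k ∈ Finset.range (j + 1), g k (j - k) =
      ∑ p ∈ (Finset.range (N + 1) ×ˢ Finset.range (N + 1)).filter
        (fun p => p.1 + p.2 ≤ N), g p.1 p.2 := by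
  rw [Finset.sum_sigma']
  refine Finset.sum_nbij' (fun a => (a.2, a.1 - a.2)) (fun p => ⟨p.1 + p.2, p.1⟩) ?_ ?_ ?_ ?_ ?_
  · rintro ⟨j, k⟩ h
    simp only [Finset.mem_sigma, Finset.mem_range] at h
    simp only [Finset.mem_filter, Finset.mem_product, Finset.mem_range]
    omega
  · rintro ⟨c, e⟩ h
    simp only [Finset.mem_filter, Finset.mem_product, Finset.mem_range] at h
    simp only [Finset.mem_sigma, Finset.mem_range]
    omega
  · rintro ⟨j, k⟩ h
    simp only [Finset.mem_sigma, Finset.mem_range] at h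
    have h1 : k + (j - k) = j := by omega
    simp only [h1]
  · rintro ⟨c, e⟩ h
    simp only [Nat.add_sub_cancel_left]
  · rintro ⟨j, k⟩ h
    rfl


theorem Zc.sum {σ : Type*} [DecidableEq σ] {ι : Type*} {n : σ →₀ ℕ} {s : Finset ι}
    {f : ι → MvPowerSeries σ ℚ} (h : ∀ i ∈ s, Zc n (f i)) : Zc n (∑ i ∈ s, f i) := by
  intro p hp; rw [map_sum]; exact Finset.sum_eq_zero fun i hi => h i hi p hp

theorem mexp_add {a b : SymT ℓ} (ha : constantCoeff a = 0)
    (hb : constantCoeff b = 0) : mexp ℓ (a + b) = mexp ℓ a * mexp ℓ b := by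
  apply MvPowerSeries.ext; intro n
  set N := dw n with hN
  set g : ℕ → ℕ → SymT ℓ := fun c e =>
    (((c.factorial : ℚ))⁻¹ * ((e.factorial : ℚ))⁻¹) • (a ^ c * b ^ e) with hg
  have hab : constantCoeff (a + b) = 0 := by rw [map_add, ha, hb, add_zero]
  have E1 : Eqn n (mexp ℓ (a + b))
      (∑ p ∈ (Finset.range (N + 1) ×ˢ Finset.range (N + 1)).filter
        (fun p => p.1 + p.2 ≤ N), g p.1 p.2) := by
    refine (mexp_trunc hab n).trans ?_
    rw [← tri_sum N g]
    have he : ∀ j, ((j.factorial : ℚ))⁻¹ • (a + b) ^ j =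
        ∑ k ∈ Finset.range (j + 1), g k (j - k) := by
      intro j
      rw [add_pow, Finset.smul_sum]
      refine Finset.sum_congr rfl fun k hk => ?_
      rw [Finset.mem_range] at hk
      have hcast : a ^ k * b ^ (j - k) * ((j.choose k : ℕ) : SymT ℓ) =
          ((j.choose k : ℕ) : ℚ) • (a ^ k * b ^ (j - k)) := by
        rw [mul_comm, ← nsmul_eq_mul, ← Nat.cast_smul_eq_nsmul ℚ]
      rw [hcast, smul_smul, inv_fact_choose (by omega), hg]
    rw [Finset.sum_congr rfl fun j _ => he j]
    exact Eqn.refl n _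
  have E2 : Eqn n
      (∑ p ∈ (Finset.range (N + 1) ×ˢ Finset.range (N + 1)).filter
        (fun p => p.1 + p.2 ≤ N), g p.1 p.2)
      (∑ p ∈ Finset.range (N + 1) ×ˢ Finset.range (N + 1), g p.1 p.2) := by
    rw [← Finset.sum_filter_add_sum_filter_not (Finset.range (N + 1) ×ˢ Finset.range (N + 1))
      (fun p => p.1 + p.2 ≤ N) (fun p => g p.1 p.2)]
    refine (Eqn.add_zc ?_).symm
    refine Zc.sum fun p hp => ?_
    rw [Finset.mem_filter] at hp
    have hgt : N < p.1 + p.2 := by omega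
    exact (((Zd.pow ha p.1).mul (Zd.pow hb p.2)).smul _).zc hgt
  have E3 : Eqn n (∑ p ∈ Finset.range (N + 1) ×ˢ Finset.range (N + 1), g p.1 p.2)
      (mexp ℓ a * mexp ℓ b) := by
    refine Eqn.trans ?_ ((mexp_trunc ha n).mul (mexp_trunc hb n)).symm
    have : (∑ c ∈ Finset.range (N + 1), ((c.factorial : ℚ))⁻¹ • a ^ c) *
        (∑ e ∈ Finset.range (N + 1), ((e.factorial : ℚ))⁻¹ • b ^ e) =
        ∑ p ∈ Finset.range (N + 1) ×ˢ Finset.range (N + 1), g p.1 p.2 := by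
      rw [Finset.sum_mul_sum, Finset.sum_product]
      refine Finset.sum_congr rfl fun c _ => Finset.sum_congr rfl fun e _ => ?_
      rw [hg, smul_mul_assoc, mul_smul_comm, smul_smul]
    rw [this]
    exact Eqn.refl n _
  exact ((E1.trans E2).trans E3) n le_rfl

theorem mexp_zero : mexp ℓ 0 = 1 := by
  rw [mexp, tsum_eq_single 0 (fun j hj => by
    rw [zero_pow hj, smul_zero])]
  simp

theorem mexp_sum {ι : Type*} {x : ι → SymT ℓ} (h : ∀ i, constantCoeff (x i) = 0)
    (s : Finset ι) : mexp ℓ (∑ i ∈ s, x i) = ∏ i ∈ s, mexp ℓ (x i) := by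
  classical
  induction s using Finset.induction_on with
  | empty => simpa using mexp_zero
  | insert a s' hnot ih =>
    rw [Finset.sum_insert hnot, Finset.prod_insert hnot,
      mexp_add (h a) (by rw [map_sum]; exact Finset.sum_eq_zero fun i _ => h i), ih]


theorem hasProd_mexp {ι : Type*} {x : ι → SymT ℓ} (hc : ∀ i, constantCoeff (x i) = 0)
    (hlf : LF x) :
    HasProd (fun i => mexp ℓ (x i)) (mexp ℓ (∑' i, x i)) := by
  refine hasProd_of_ev fun n => ⟨(hlf n).toFinset, fun F hF => ?_⟩
  have h2 : Eqn n (∑ i ∈ F, x i) (∑' i, x i) := by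
    refine (hlf.eqn n F fun i hi => ?_).symm
    by_contra hz
    exact hi (hF ((hlf n).mem_toFinset.mpr hz))
  rw [← mexp_sum hc F]
  exact mexp_eqn (by rw [map_sum]; exact Finset.sum_eq_zero fun i _ => hc i)
    (hlf.constantCoeff_tsum hc) h2 n le_rfl

theorem b_apply (S : Finset ℕ) (N d : ℕ) :
    (∑ d' ∈ S, Finsupp.single d' N) d = if d ∈ S then N else 0 := by
  rw [Finset.sum_apply']
  simp only [Finsupp.single_apply]
  exact Finset.sum_ite_eq' S d fun _ => N

theorem prod_trunc_sum (N : ℕ) (f : ℕ → ℕ → SymT ℓ) (hf : ∀ d, f d 0 = 1) (s : Finset ℕ) :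
    ∏ d ∈ s, (∑ c ∈ Finset.range (N + 1), f d c) =
      ∑ m ∈ Finset.Iic (∑ d ∈ s, Finsupp.single d N), ∏ d ∈ s, f d (m d) := by
  induction s using Finset.induction_on with
  | empty =>
    simp only [Finset.prod_empty, Finset.sum_empty]
    rw [show (Finset.Iic (0 : ℕ →₀ ℕ)) = {0} by
      ext m; rw [Finset.mem_Iic, Finset.mem_singleton, nonpos_iff_eq_zero]]
    simp
  | insert a s' hnot ih =>
    have hb'a : (∑ d ∈ s', Finsupp.single d N) a = 0 := by
      rw [b_apply]; simp [hnot]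
    rw [Finset.prod_insert hnot, ih, Finset.sum_mul_sum, Finset.sum_insert hnot,
      ← Finset.sum_product']
    refine Finset.sum_nbij' (fun p => Finsupp.single a p.1 + p.2)
      (fun m => (m a, m.erase a)) ?_ ?_ ?_ ?_ ?_
    · rintro ⟨c, m⟩ hp
      simp only [Finset.mem_product, Finset.mem_range, Finset.mem_Iic] at hp
      rw [Finset.mem_Iic, Finsupp.le_def]
      intro s
      rcases eq_or_ne s a with rfl | hs
      · simp only [Finsupp.add_apply, Finsupp.single_eq_same]
        have : m s ≤ 0 := hb'a ▸ hp.2 s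
        omega
      · simp only [Finsupp.add_apply, Finsupp.single_eq_of_ne hs,
          zero_add]
        exact hp.2 s
    · intro m hm
      rw [Finset.mem_Iic, Finsupp.le_def] at hm
      simp only [Finset.mem_product, Finset.mem_range, Finset.mem_Iic]
      constructor
      · have := hm a
        simp only [Finsupp.add_apply, Finsupp.single_eq_same, hb'a] at this
        omega
      · rw [Finsupp.le_def]
        intro s
        rcases eq_or_ne s a with rfl | hs
        · simp [Finsupp.erase_same]
        · have := hm s
          simp only [Finsupp.add_apply, Finsupp.single_eq_of_ne hs,
            zero_add] at this
          simpa [Finsupp.erase_ne hs] using this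
    · rintro ⟨c, m⟩ hp
      simp only [Finset.mem_product, Finset.mem_range, Finset.mem_Iic] at hp
      have hma : m a = 0 := by
        have : m a ≤ 0 := hb'a ▸ hp.2 a
        omega
      have h1 : (Finsupp.single a c + m) a = c := by
        simp [Finsupp.add_apply, Finsupp.single_eq_same, hma]
      have h2 : (Finsupp.single a c + m).erase a = m := by
        rw [Finsupp.erase_add, Finsupp.erase_single, zero_add,
          Finsupp.erase_of_notMem_support (by simp [Finsupp.mem_support_iff, hma])]
      dsimp only
      rw [h1, h2]
    · intro m hm
      exact Finsupp.single_add_erase a m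
    · rintro ⟨c, m⟩ hp
      simp only [Finset.mem_product, Finset.mem_range, Finset.mem_Iic] at hp
      have hma : m a = 0 := by
        have : m a ≤ 0 := hb'a ▸ hp.2 a
        omega
      rw [Finset.prod_insert hnot]
      have h1 : (Finsupp.single a c + m) a = c := by
        simp [Finsupp.add_apply, Finsupp.single_eq_same, hma]
      rw [h1]
      congr 1
      refine Finset.prod_congr rfl fun d hd => ?_
      have hda : d ≠ a := fun h => hnot (h ▸ hd)
      congr 1
      simp [Finsupp.add_apply, Finsupp.single_eq_of_ne hda]

theorem hasSum_multinomial {x : ℕ → SymT ℓ} (hc : ∀ d, constantCoeff (x d) = 0)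
    (hlf : LF x) :
    HasSum (fun m : ℕ →₀ ℕ => ∏ d ∈ m.support, (((m d).factorial : ℚ))⁻¹ • x d ^ (m d))
      (mexp ℓ (∑' d, x d)) := by
  refine hasSum_of_ev fun n => ?_
  set N := dw n with hN
  set S := (hlf n).toFinset with hS
  set b := ∑ d ∈ S, Finsupp.single d N with hb
  have hbd : ∀ d, b d = if d ∈ S then N else 0 := fun d => b_apply S N d
  have hZterm : ∀ m : ℕ →₀ ℕ, ∀ d ∈ m.support,
      Zc n ((((m d).factorial : ℚ))⁻¹ • x d ^ (m d)) →
      Zc n (∏ d' ∈ m.support, (((m d').factorial : ℚ))⁻¹ • x d' ^ (m d')) := by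
    intro m d hd hzc
    rw [← Finset.mul_prod_erase _ _ hd]
    exact hzc.mul_right _
  refine ⟨Finset.Iic b, fun m hm => ?_, ?_⟩
  · -- outside: coefficient vanishes
    rw [Finset.mem_Iic, Finsupp.le_def, not_forall] at hm
    obtain ⟨d, hd⟩ := hm
    rw [not_le] at hd
    have hdsupp : d ∈ m.support := Finsupp.mem_support_iff.mpr (by omega)
    by_cases hdS : d ∈ S
    · -- m d > N : term has high order
      have hNd : N < m d := by rw [hbd d, if_pos hdS] at hd; omega
      refine (hZterm m d hdsupp (((Zd.pow (hc d) (m d)).smul _).zc hNd)) n le_rfl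
    · -- d ∉ S : x d is Zc n
      have hxd : Zc n (x d) := by
        by_contra hz
        exact hdS ((hlf n).mem_toFinset.mpr hz)
      have hmd : 1 ≤ m d := by rw [hbd d, if_neg hdS] at hd; omega
      have : x d ^ (m d) = x d ^ (m d - 1) * x d := by
        rw [← pow_succ]; congr 1; omega
      refine (hZterm m d hdsupp ((this ▸ hxd.mul_left _).smul _)) n le_rfl
  · -- the main computation
    have E0 : Eqn n (mexp ℓ (∑' d, x d)) (mexp ℓ (∑ d ∈ S, x d)) :=
      mexp_eqn (hlf.constantCoeff_tsum hc)
        (by rw [map_sum]; exact Finset.sum_eq_zero fun i _ => hc i)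
        (hlf.eqn n S fun i hi => by
          by_contra hz; exact hi ((hlf n).mem_toFinset.mpr hz))
    have E1 : Eqn n (mexp ℓ (∑ d ∈ S, x d))
        (∏ d ∈ S, ∑ c ∈ Finset.range (N + 1), ((c.factorial : ℚ))⁻¹ • x d ^ c) := by
      rw [mexp_sum hc S]
      exact Eqn.prod fun d _ => mexp_trunc (hc d) n
    have E2 : (∏ d ∈ S, ∑ c ∈ Finset.range (N + 1), ((c.factorial : ℚ))⁻¹ • x d ^ c) =
        ∑ m ∈ Finset.Iic b, ∏ d ∈ S, (((m d).factorial : ℚ))⁻¹ • x d ^ (m d) :=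
      prod_trunc_sum N (fun d c => ((c.factorial : ℚ))⁻¹ • x d ^ c)
        (fun d => by simp) S
    have E3 : ∀ m ∈ Finset.Iic b,
        ∏ d ∈ S, (((m d).factorial : ℚ))⁻¹ • x d ^ (m d) =
        ∏ d ∈ m.support, (((m d).factorial : ℚ))⁻¹ • x d ^ (m d) := by
      intro m hm
      rw [Finset.mem_Iic, Finsupp.le_def] at hm
      refine (Finset.prod_subset (fun d hd => ?_) (fun d _ hd => ?_)).symm
      · rw [Finsupp.mem_support_iff] at hd
        have := hm d
        rw [hbd d] at this
        by_contra hdS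
        rw [if_neg hdS] at this
        omega
      · rw [Finsupp.notMem_support_iff] at hd
        simp [hd]
    have key : coeff n (mexp ℓ (∑' d, x d)) =
        coeff n (∑ m ∈ Finset.Iic b, ∏ d ∈ m.support,
          (((m d).factorial : ℚ))⁻¹ • x d ^ (m d)) := by
      rw [E0 n le_rfl, E1 n le_rfl, E2, Finset.sum_congr rfl E3]
    rw [key, map_sum]


theorem my_prod_smul {ι : Type*} (s : Finset ι) (b : ι → ℚ) (f : ι → SymT ℓ) :
    ∏ i ∈ s, b i • f i = (∏ i ∈ s, b i) • ∏ i ∈ s, f i := by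
  classical
  induction s using Finset.induction_on with
  | empty => simp
  | insert a s' hnot ih =>
    rw [Finset.prod_insert hnot, Finset.prod_insert hnot, Finset.prod_insert hnot, ih,
      smul_mul_smul_comm]

theorem constantCoeff_Tv_pow (i : Fin ℓ) (q : ℕ) (hq : 1 ≤ q) :
    constantCoeff (Tv ℓ i ^ q) = 0 := by
  rw [map_pow, Tv, constantCoeff_X, zero_pow (by omega)]

theorem isUnit_one_sub_Tv_pow (i : Fin ℓ) (q : ℕ) (hq : 1 ≤ q) :
    IsUnit (1 - Tv ℓ i ^ q) := by
  rw [MvPowerSeries.isUnit_iff_constantCoeff, map_sub, map_one, constantCoeff_Tv_pow i q hq,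
    sub_zero]
  exact isUnit_one

theorem geom_partial {n : (ℕ ⊕ Fin ℓ) →₀ ℕ} (i : Fin ℓ) (q K : ℕ) (hq : 1 ≤ q)
    (hK : dw n < q * K) :
    Eqn n (∑ a ∈ Finset.range K, Tv ℓ i ^ (a * q)) (Ring.inverse (1 - Tv ℓ i ^ q)) := by
  set y : SymT ℓ := Tv ℓ i ^ q with hy
  set R : SymT ℓ := Ring.inverse (1 - y) with hR
  have hRu : (1 - y) * R = 1 := Ring.mul_inverse_cancel _ (isUnit_one_sub_Tv_pow i q hq)
  have hgeom : (∑ a ∈ Finset.range K, y ^ a) * (1 - y) = 1 - y ^ K := by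
    linear_combination (-1 : SymT ℓ) * geom_sum_mul y K
  have hG : (∑ a ∈ Finset.range K, y ^ a) = R + (-(y ^ K * R)) := by
    calc (∑ a ∈ Finset.range K, y ^ a)
        = (∑ a ∈ Finset.range K, y ^ a) * ((1 - y) * R) := by rw [hRu, mul_one]
      _ = ((∑ a ∈ Finset.range K, y ^ a) * (1 - y)) * R := by ring
      _ = (1 - y ^ K) * R := by rw [hgeom]
      _ = R + (-(y ^ K * R)) := by ring
  have hpow : ∀ a : ℕ, y ^ a = Tv ℓ i ^ (a * q) := fun a => by
    rw [hy, ← pow_mul, mul_comm]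
  rw [show (∑ a ∈ Finset.range K, Tv ℓ i ^ (a * q)) = ∑ a ∈ Finset.range K, y ^ a from
    Finset.sum_congr rfl fun a _ => (hpow a).symm, hG]
  refine Eqn.add_zc ?_
  intro p hp
  rw [map_neg, neg_eq_zero]
  have hZ : Zd (q * K) (y ^ K * Ring.inverse (1 - y)) := by
    have : Zd (q * K) (y ^ K) := by
      rw [hy, ← pow_mul]
      exact Zd_X_pow _ _
    simpa using this.mul (Zd_zero_any (Ring.inverse (1 - y)))
  exact hZ.zc hK p hp

/-- the double-indexed atoms -/
noncomputable def catom (ℓ k : ℕ) (j : Fin ℓ → ℕ) : SymT ℓ :=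
  (((k + 1 : ℕ) : ℚ))⁻¹ • (Pv ℓ k * ∏ i : Fin ℓ, Tv ℓ i ^ (j i * (k + 1)))

/-- the `k`-th term of the common value -/
noncomputable def xLf (ℓ k : ℕ) : SymT ℓ :=
  (((k + 1 : ℕ) : ℚ))⁻¹ • (Pv ℓ k * ∏ i : Fin ℓ, Ring.inverse (1 - Tv ℓ i ^ (k + 1)))

/-- the common value of both sides, before applying `mexp` -/
noncomputable def Sbig (ℓ : ℕ) : SymT ℓ := ∑' k : ℕ, xLf ℓ k

theorem constantCoeff_smul_X_mul (r : ℚ) (s : ℕ ⊕ Fin ℓ) (y : SymT ℓ) :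
    constantCoeff (r • ((X s : SymT ℓ) * y)) = 0 := by
  rw [← coeff_zero_eq_constantCoeff_apply, MvPowerSeries.coeff_smul, coeff_zero_eq_constantCoeff_apply, map_mul, constantCoeff_X, zero_mul, mul_zero]

theorem constantCoeff_catom (k : ℕ) (j : Fin ℓ → ℕ) : constantCoeff (catom ℓ k j) = 0 :=
  constantCoeff_smul_X_mul _ _ _

theorem constantCoeff_xLf (k : ℕ) : constantCoeff (xLf ℓ k) = 0 :=
  constantCoeff_smul_X_mul _ _ _

theorem Zc_smul_X_mul {n : (ℕ ⊕ Fin ℓ) →₀ ℕ} (r : ℚ) {s : ℕ ⊕ Fin ℓ} (hs : n s = 0)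
    (y : SymT ℓ) : Zc n (r • ((X s : SymT ℓ) * y)) :=
  (Zc_X_mul hs y).smul r

/-- `Kn n` : the finite set of relevant `k`s -/
noncomputable def Kn (n : (ℕ ⊕ Fin ℓ) →₀ ℕ) : Finset ℕ :=
  n.support.preimage Sum.inl Sum.inl_injective.injOn

theorem Zc_of_not_mem_Kn {n : (ℕ ⊕ Fin ℓ) →₀ ℕ} {k : ℕ} (hk : k ∉ Kn n) :
    n (Sum.inl k) = 0 := by
  rw [Kn, Finset.mem_preimage] at hk
  exact Finsupp.notMem_support_iff.mp hk

theorem LF_xLf : LF (xLf ℓ) := by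
  intro n
  refine Set.Finite.subset ((Kn n).finite_toSet) fun k hk => ?_
  simp only [Set.mem_setOf_eq] at hk
  by_contra hkK
  exact hk (Zc_smul_X_mul _ (Zc_of_not_mem_Kn hkK) _)

theorem LF_catom (j : Fin ℓ → ℕ) : LF (fun k => catom ℓ k j) := by
  intro n
  refine Set.Finite.subset ((Kn n).finite_toSet) fun k hk => ?_
  simp only [Set.mem_setOf_eq] at hk
  by_contra hkK
  exact hk (Zc_smul_X_mul _ (Zc_of_not_mem_Kn hkK) _)

theorem Zc_catom_of_big {n : (ℕ ⊕ Fin ℓ) →₀ ℕ} {k : ℕ} {j : Fin ℓ → ℕ} {i : Fin ℓ}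
    (hi : dw n < j i * (k + 1)) : Zc n (catom ℓ k j) := by
  rw [catom]
  refine Zc.smul _ ?_
  refine Zc.mul_left _ ?_
  rw [← Finset.mul_prod_erase _ _ (Finset.mem_univ i)]
  refine Zc.mul_right _ ?_
  exact (Zd_X_pow (Sum.inr i) (j i * (k + 1))).zc hi


theorem LF.zc_tsum {σ : Type*} [DecidableEq σ] {ι : Type*} {f : ι → MvPowerSeries σ ℚ}
    (h : LF f) {n : σ →₀ ℕ} (hall : ∀ i, Zc n (f i)) : Zc n (∑' i, f i) := fun p hp => by
  rw [h.coeff_tsum hp ∅ (fun i _ => hall i), Finset.sum_empty]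

/-- the finite set of relevant `j`s for a monomial `n` -/
noncomputable def Jn (ℓ : ℕ) (n : (ℕ ⊕ Fin ℓ) →₀ ℕ) : Finset (Fin ℓ → ℕ) :=
  Fintype.piFinset fun _ => Finset.range (dw n + 1)

/-- the `j`-th factor exponent on the right-hand side -/
noncomputable def Af (ℓ : ℕ) (j : Fin ℓ → ℕ) : SymT ℓ := ∑' k : ℕ, catom ℓ k j

theorem coeff_xLf_eq {n : (ℕ ⊕ Fin ℓ) →₀ ℕ} (k : ℕ) :
    coeff n (xLf ℓ k) = ∑ j ∈ Jn ℓ n, coeff n (catom ℓ k j) := by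
  have step1 : ∑ j ∈ Jn ℓ n, catom ℓ k j =
      (((k + 1 : ℕ) : ℚ))⁻¹ • (Pv ℓ k *
        ∑ j ∈ Jn ℓ n, ∏ i : Fin ℓ, Tv ℓ i ^ (j i * (k + 1))) := by
    rw [Finset.mul_sum, Finset.smul_sum]
    rfl
  have step2 : ∑ j ∈ Jn ℓ n, ∏ i : Fin ℓ, Tv ℓ i ^ (j i * (k + 1)) =
      ∏ i : Fin ℓ, ∑ a ∈ Finset.range (dw n + 1), Tv ℓ i ^ (a * (k + 1)) := by
    rw [Jn]
    exact (Finset.prod_univ_sum (fun _ : Fin ℓ => Finset.range (dw n + 1))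
      (fun i a => Tv ℓ i ^ (a * (k + 1)))).symm
  have step3 : Eqn n (∏ i : Fin ℓ, ∑ a ∈ Finset.range (dw n + 1), Tv ℓ i ^ (a * (k + 1)))
      (∏ i : Fin ℓ, Ring.inverse (1 - Tv ℓ i ^ (k + 1))) := by
    refine Eqn.prod fun i _ => geom_partial i (k + 1) (dw n + 1) (by omega) ?_
    exact Nat.lt_of_lt_of_le (Nat.lt_succ_self _)
      (Nat.le_mul_of_pos_left _ (Nat.succ_pos k))
  have E : Eqn n (∑ j ∈ Jn ℓ n, catom ℓ k j) (xLf ℓ k) := by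
    rw [step1, step2, xLf]
    exact ((Eqn.refl n (Pv ℓ k)).mul step3).smul _
  rw [← map_sum]
  exact (E n le_rfl).symm

theorem coeff_Af_eq {n : (ℕ ⊕ Fin ℓ) →₀ ℕ} (j : Fin ℓ → ℕ) :
    coeff n (Af ℓ j) = ∑ k ∈ Kn n, coeff n (catom ℓ k j) :=
  (LF_catom j).coeff_tsum le_rfl (Kn n) fun k hk =>
    Zc_smul_X_mul _ (Zc_of_not_mem_Kn hk) _

theorem Zc_Af_of_not_mem_Jn {n : (ℕ ⊕ Fin ℓ) →₀ ℕ} {j : Fin ℓ → ℕ} (hj : j ∉ Jn ℓ n) :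
    Zc n (Af ℓ j) := by
  rw [Jn, Fintype.mem_piFinset, not_forall] at hj
  obtain ⟨i, hi⟩ := hj
  rw [Finset.mem_range, not_lt] at hi
  refine (LF_catom j).zc_tsum fun k => Zc_catom_of_big (i := i) ?_
  calc dw n < dw n + 1 := Nat.lt_succ_self _
    _ ≤ j i := hi
    _ ≤ j i * (k + 1) := Nat.le_mul_of_pos_right _ (Nat.succ_pos k)

theorem LF_Af : LF (Af ℓ) := by
  intro n
  refine Set.Finite.subset (Jn ℓ n).finite_toSet fun j hj => ?_
  simp only [Set.mem_setOf_eq] at hj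
  by_contra hjJ
  exact hj (Zc_Af_of_not_mem_Jn hjJ)

theorem hasSum_Af : HasSum (Af ℓ) (Sbig ℓ) := by
  refine hasSum_of_ev fun n => ⟨Jn ℓ n, fun j hj => Zc_Af_of_not_mem_Jn hj n le_rfl, ?_⟩
  have hS : coeff n (Sbig ℓ) = ∑ k ∈ Kn n, coeff n (xLf ℓ k) :=
    LF_xLf.coeff_tsum le_rfl (Kn n) fun k hk => Zc_smul_X_mul _ (Zc_of_not_mem_Kn hk) _
  rw [hS]
  rw [Finset.sum_congr rfl fun k (_ : k ∈ Kn n) => coeff_xLf_eq k, Finset.sum_comm]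
  exact (Finset.sum_congr rfl fun j _ => (coeff_Af_eq j).symm)

/-- `H(u) = exp(∑_{k≥1} p_k u^k / k)`. -/
noncomputable def Hgen (ℓ : ℕ) (u : SymT ℓ) : SymT ℓ :=
  mexp ℓ (∑' k : ℕ, (((k + 1 : ℕ) : ℚ))⁻¹ • (Pv ℓ k * u ^ (k + 1)))

/-- `z_μ = ∏_i i^{m_i(μ)} m_i(μ)!` for the partition `μ` having `m d` parts equal
to `d + 1`. -/
noncomputable def zq (m : ℕ →₀ ℕ) : ℚ :=
  ∏ d ∈ m.support, ((d + 1 : ℕ) : ℚ) ^ (m d) * (m d).factorial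


theorem Hgen_eq_mexp_Af (j : Fin ℓ → ℕ) :
    Hgen ℓ (∏ i : Fin ℓ, Tv ℓ i ^ j i) = mexp ℓ (Af ℓ j) := by
  rw [Hgen, Af]
  have h : ∀ k : ℕ, (((k + 1 : ℕ) : ℚ))⁻¹ • (Pv ℓ k * (∏ i : Fin ℓ, Tv ℓ i ^ j i) ^ (k + 1)) =
      catom ℓ k j := by
    intro k
    simp only [catom]
    have : (∏ i : Fin ℓ, Tv ℓ i ^ j i) ^ (k + 1) =
        ∏ i : Fin ℓ, Tv ℓ i ^ (j i * (k + 1)) := by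
      rw [← Finset.prod_pow]
      exact Finset.prod_congr rfl fun i _ => (pow_mul _ _ _).symm
    rw [this]
  rw [tsum_congr h]

theorem lhs_term_eq (m : ℕ →₀ ℕ) :
    (zq m)⁻¹ • ((∏ i : Fin ℓ, ∏ d ∈ m.support,
        Ring.inverse (1 - Tv ℓ i ^ (d + 1)) ^ m d) * ∏ d ∈ m.support, Pv ℓ d ^ m d) =
      ∏ d ∈ m.support, (((m d).factorial : ℚ))⁻¹ • xLf ℓ d ^ (m d) := by
  refine Eq.symm ?_
  have h1 : ∀ d, (((m d).factorial : ℚ))⁻¹ • xLf ℓ d ^ (m d) =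
      ((((m d).factorial : ℚ))⁻¹ * (((d + 1 : ℕ) : ℚ))⁻¹ ^ (m d)) •
        (Pv ℓ d ^ (m d) * ∏ i : Fin ℓ, Ring.inverse (1 - Tv ℓ i ^ (d + 1)) ^ (m d)) := by
    intro d
    rw [xLf, smul_pow, mul_pow, ← Finset.prod_pow, smul_smul]
  rw [Finset.prod_congr rfl fun d _ => h1 d, my_prod_smul]
  congr 1
  · rw [zq, ← Finset.prod_inv_distrib]
    refine Finset.prod_congr rfl fun d _ => ?_
    rw [mul_inv, inv_pow, mul_comm]
  · rw [Finset.prod_mul_distrib, Finset.prod_comm, mul_comm]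


/-- The sum over all partitions `μ` (encoded as `m : ℕ →₀ ℕ`, with `m d` parts equal
to `d + 1`) of `∏_{i=1}^{ℓ} ∏_{j=1}^{ℓ(μ)} 1/(1 − t_i^{μ_j}) · p_μ/z_μ` equals
`∏_{j ∈ ℕ^ℓ} H(t_1^{j_1} ⋯ t_ℓ^{j_ℓ})`, where `H(u) = exp(∑_{k≥1} p_k u^k/k)`
(the factor for `j = (0,...,0)` being `H(1)`). -/
theorem sum_partitions_eq_prod_H (ℓ : ℕ) :
    (∑' m : ℕ →₀ ℕ, (zq m)⁻¹ •
        ((∏ i : Fin ℓ, ∏ d ∈ m.support,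
            Ring.inverse (1 - Tv ℓ i ^ (d + 1)) ^ m d) *
          ∏ d ∈ m.support, Pv ℓ d ^ m d)) =
      ∏' j : Fin ℓ → ℕ, Hgen ℓ (∏ i : Fin ℓ, Tv ℓ i ^ j i) := by
  have hRHS : (∏' j : Fin ℓ → ℕ, Hgen ℓ (∏ i : Fin ℓ, Tv ℓ i ^ j i)) =
      mexp ℓ (Sbig ℓ) := by
    rw [tprod_congr Hgen_eq_mexp_Af]
    have hP : HasProd (fun j => mexp ℓ (Af ℓ j)) (mexp ℓ (∑' j, Af ℓ j)) :=
      hasProd_mexp (fun j => (LF_catom j).constantCoeff_tsum fun k => constantCoeff_catom k j)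
        LF_Af
    rw [hP.tprod_eq, hasSum_Af.tsum_eq]
  have hLHS : (∑' m : ℕ →₀ ℕ, (zq m)⁻¹ •
      ((∏ i : Fin ℓ, ∏ d ∈ m.support,
          Ring.inverse (1 - Tv ℓ i ^ (d + 1)) ^ m d) *
        ∏ d ∈ m.support, Pv ℓ d ^ m d)) = mexp ℓ (Sbig ℓ) := by
    rw [tsum_congr lhs_term_eq]
    have hS : HasSum (fun m : ℕ →₀ ℕ =>
        ∏ d ∈ m.support, (((m d).factorial : ℚ))⁻¹ • xLf ℓ d ^ (m d))
        (mexp ℓ (∑' d, xLf ℓ d)) :=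
      hasSum_multinomial constantCoeff_xLf LF_xLf
    rw [hS.tsum_eq]
    rfl
  rw [hLHS, hRHS]
end

section
/- In the ring of symmetric functions over ℚ, the sum ∑_{n≥1} (1/n) ∑_{d|n} μ(d) (−1)^{n/d − 1} p_d^{n/d} equals L − L[p_1^2], where L = ∑_{n≥1} (1/n) ∑_{d|n} μ(d) p_d^{n/d} is the total Lyndon symmetric function and L[p_1^2] is obtained from L by replacing each p_d with p_d^2. -/
open ArithmeticFunction

/-- The product topology on the completed ring of symmetric functions
`Λ̂_ℚ = ℚ⟦p_1, p_2, ...⟧` (power sums as free generators, `X (d-1) = p_d`). -/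
noncomputable instance : TopologicalSpace (MvPowerSeries ℕ ℚ) := Pi.topologicalSpace

/-- The power sum `p_d` (for `d ≥ 1`), as the free generator `X (d-1)` of
`ℚ⟦p_1, p_2, ...⟧`. -/
noncomputable def Pgen (d : ℕ) : MvPowerSeries ℕ ℚ := MvPowerSeries.X (d - 1)

/-- The total Lyndon symmetric function `L = ∑_{n≥1} (1/n) ∑_{d∣n} μ(d) p_d^{n/d}`. -/
noncomputable def LyndonL : MvPowerSeries ℕ ℚ :=
  ∑' n : ℕ, (((n + 1 : ℕ) : ℚ))⁻¹ •
    ∑ d ∈ (n + 1).divisors, ((moebius d : ℤ) : ℚ) • Pgen d ^ ((n + 1) / d)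

/-- `L[p_1^2]`: the result of replacing each `p_d` by `p_d^2` in `L`, i.e.
`∑_{n≥1} (1/n) ∑_{d∣n} μ(d) p_d^{2n/d}`. -/
noncomputable def LyndonLsq : MvPowerSeries ℕ ℚ :=
  ∑' n : ℕ, (((n + 1 : ℕ) : ℚ))⁻¹ •
    ∑ d ∈ (n + 1).divisors, ((moebius d : ℤ) : ℚ) • Pgen d ^ (2 * ((n + 1) / d))

/- ### Auxiliary setup -/

instance : IsTopologicalAddGroup (MvPowerSeries ℕ ℚ) :=
  inferInstanceAs (IsTopologicalAddGroup ((ℕ →₀ ℕ) → ℚ))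

instance : T2Space (MvPowerSeries ℕ ℚ) := inferInstanceAs (T2Space ((ℕ →₀ ℕ) → ℚ))

/-- The weighted degree assigning weight `i+1` to the variable `X i = p_{i+1}`. -/
def wgt (m : ℕ →₀ ℕ) : ℕ := m.sum fun i v => (i + 1) * v

lemma wgt_single (i k : ℕ) : wgt (Finsupp.single i k) = (i + 1) * k := by
  simp [wgt, Finsupp.sum_single_index]

/-- A linear combination of `p_d^{E d}` over divisors `d` of `N` with `d * E d = t * N`
is homogeneous of weighted degree `t * N`. -/
lemma coeff_divsum_eq_zero (N t : ℕ) (c : ℕ → ℚ) (E : ℕ → ℕ)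
    (hE : ∀ d ∈ N.divisors, d * E d = t * N) (m : ℕ →₀ ℕ) (h : wgt m ≠ t * N) :
    MvPowerSeries.coeff m (∑ d ∈ N.divisors, c d • Pgen d ^ E d) = 0 := by
  rw [map_sum]
  refine Finset.sum_eq_zero fun d hd => ?_
  obtain ⟨hdvd, hN0⟩ := Nat.mem_divisors.mp hd
  have hd0 : d ≠ 0 := by rintro rfl; exact hN0 (Nat.eq_zero_of_zero_dvd hdvd)
  rw [map_smul, Pgen, MvPowerSeries.X_pow_eq, smul_eq_mul, MvPowerSeries.coeff_monomial]
  split_ifs with hm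
  · exfalso
    apply h
    subst hm
    rw [wgt_single]
    have hd1 : d - 1 + 1 = d := by omega
    rw [hd1]
    exact hE d hd
  · simp

/-- The `n`-th Lyndon symmetric function `L_{n+1}`. -/
noncomputable def fL (n : ℕ) : MvPowerSeries ℕ ℚ :=
  (((n + 1 : ℕ) : ℚ))⁻¹ •
    ∑ d ∈ (n + 1).divisors, ((moebius d : ℤ) : ℚ) • Pgen d ^ ((n + 1) / d)

/-- The `n`-th term of `L[p_1^2]`. -/
noncomputable def fS (n : ℕ) : MvPowerSeries ℕ ℚ :=
  (((n + 1 : ℕ) : ℚ))⁻¹ •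
    ∑ d ∈ (n + 1).divisors, ((moebius d : ℤ) : ℚ) • Pgen d ^ (2 * ((n + 1) / d))

/-- The `n`-th signed Lyndon symmetric function. -/
noncomputable def fsign (n : ℕ) : MvPowerSeries ℕ ℚ :=
  (((n + 1 : ℕ) : ℚ))⁻¹ •
    ∑ d ∈ (n + 1).divisors,
      (((moebius d : ℤ) : ℚ) * (-1 : ℚ) ^ ((n + 1) / d - 1)) • Pgen d ^ ((n + 1) / d)

/-- The terms of `L[p_1^2]` reindexed to degrees: `g n` is the part of `L[p_1^2]` of
degree `n+1`. -/
noncomputable def gS (n : ℕ) : MvPowerSeries ℕ ℚ :=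
  if 2 ∣ (n + 1) then fS ((n + 1) / 2 - 1) else 0

lemma coeff_fL_eq_zero {n : ℕ} {m : ℕ →₀ ℕ} (h : wgt m ≠ n + 1) :
    MvPowerSeries.coeff m (fL n) = 0 := by
  rw [fL, map_smul, smul_eq_mul,
    coeff_divsum_eq_zero (n + 1) 1 _ _ (fun d hd => by
      rw [Nat.mul_div_cancel' (Nat.mem_divisors.mp hd).1, one_mul]) m (by simpa using h),
    mul_zero]

lemma coeff_fS_eq_zero {n : ℕ} {m : ℕ →₀ ℕ} (h : wgt m ≠ 2 * (n + 1)) :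
    MvPowerSeries.coeff m (fS n) = 0 := by
  rw [fS, map_smul, smul_eq_mul,
    coeff_divsum_eq_zero (n + 1) 2 _ _ (fun d hd => by
      rw [← mul_assoc, mul_comm d 2, mul_assoc,
        Nat.mul_div_cancel' (Nat.mem_divisors.mp hd).1]) m h,
    mul_zero]

lemma summable_fL : Summable fL := by
  refine Pi.summable.mpr fun m => ?_
  refine summable_of_ne_finset_zero (s := {wgt m - 1}) fun n hn => ?_
  refine coeff_fL_eq_zero fun he => ?_
  simp only [Finset.mem_singleton] at hn
  omega

lemma summable_fS : Summable fS := by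
  refine Pi.summable.mpr fun m => ?_
  refine summable_of_ne_finset_zero (s := {wgt m / 2 - 1}) fun n hn => ?_
  refine coeff_fS_eq_zero fun he => ?_
  simp only [Finset.mem_singleton] at hn
  omega

lemma gS_comp (m : ℕ) : gS (2 * m + 1) = fS m := by
  have h : 2 ∣ (2 * m + 1 + 1) := ⟨m + 1, by ring⟩
  rw [gS, if_pos h]
  have he : (2 * m + 1 + 1) / 2 - 1 = m := by omega
  rw [he]

lemma gS_support : Function.support gS ⊆ Set.range (fun m : ℕ => 2 * m + 1) := by
  intro n hn
  rw [Function.mem_support, gS] at hn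
  by_cases h : 2 ∣ (n + 1)
  · obtain ⟨k, hk⟩ := h
    refine ⟨k - 1, ?_⟩
    show 2 * (k - 1) + 1 = n
    omega
  · exact absurd (if_neg h) hn

lemma injective_double : Function.Injective (fun m : ℕ => 2 * m + 1) := by
  intro a b h
  simp only [] at h
  omega

lemma gS_vanish : ∀ x ∉ Set.range (fun m : ℕ => 2 * m + 1), gS x = 0 := by
  intro x hx
  by_contra h0
  exact hx (gS_support h0)

lemma summable_gS : Summable gS := by
  refine (injective_double.summable_iff gS_vanish).mp ?_
  have : (gS ∘ fun m : ℕ => 2 * m + 1) = fS := funext gS_comp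
  rw [this]
  exact summable_fS

lemma tsum_gS : ∑' n, gS n = ∑' n, fS n := by
  have : (fun m : ℕ => gS (2 * m + 1)) = fS := funext gS_comp
  rw [← injective_double.tsum_eq gS_support, this]

/-- The key finset identity: divisors `d` of `2m` with `2m/d` even are exactly
the divisors of `m`. -/
lemma filter_divisors (m : ℕ) (hm : 0 < m) :
    (Nat.divisors (2 * m)).filter (fun d => 2 ∣ (2 * m) / d) = Nat.divisors m := by
  ext d
  simp only [Finset.mem_filter, Nat.mem_divisors]
  constructor
  · rintro ⟨⟨hdN, hN0⟩, hdk⟩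
    have hd0 : d ≠ 0 := by rintro rfl; exact hN0 (Nat.eq_zero_of_zero_dvd hdN)
    obtain ⟨k, hk⟩ := hdN
    obtain ⟨j, hj⟩ := hdk
    have hdiv : (2 * m) / d = k := by
      rw [hk, Nat.mul_div_cancel_left k (Nat.pos_of_ne_zero hd0)]
    refine ⟨⟨j, ?_⟩, hm.ne'⟩
    have hkj : k = 2 * j := by rw [← hdiv, hj]
    have h5 : 2 * m = 2 * (d * j) := by rw [hk, hkj]; ring
    omega
  · rintro ⟨hdm, -⟩
    refine ⟨⟨hdm.mul_left 2, by positivity⟩, ?_⟩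
    rw [Nat.mul_div_assoc 2 hdm]
    exact ⟨m / d, rfl⟩

lemma even_case (n m : ℕ) (hm : 2 * m = n + 1) (hm0 : 0 < m) :
    fL n - fsign n = fS (m - 1) := by
  have hmm : m - 1 + 1 = m := by omega
  rw [fL, fsign, fS, hmm, ← smul_sub, ← Finset.sum_sub_distrib]
  have key : ∀ d ∈ (n + 1).divisors,
      ((moebius d : ℤ) : ℚ) • Pgen d ^ ((n + 1) / d) -
        (((moebius d : ℤ) : ℚ) * (-1 : ℚ) ^ ((n + 1) / d - 1)) • Pgen d ^ ((n + 1) / d) =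
      if 2 ∣ (n + 1) / d then (2 * ((moebius d : ℤ) : ℚ)) • Pgen d ^ ((n + 1) / d) else 0 := by
    intro d hd
    obtain ⟨hdvd, hN0⟩ := Nat.mem_divisors.mp hd
    have hd0 : d ≠ 0 := by rintro rfl; exact hN0 (Nat.eq_zero_of_zero_dvd hdvd)
    have hkpos : 0 < (n + 1) / d := Nat.div_pos (Nat.le_of_dvd (by omega) hdvd)
      (Nat.pos_of_ne_zero hd0)
    split_ifs with h2
    · obtain ⟨j, hj⟩ := h2
      have hj0 : 0 < 2 * j := hj ▸ hkpos
      have hodd : Odd (2 * j - 1) := ⟨j - 1, by omega⟩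
      rw [hj, hodd.neg_one_pow, ← sub_smul]
      ring_nf
    · have hodd2 : Odd ((n + 1) / d) :=
        Nat.odd_iff.mpr (Nat.two_dvd_ne_zero.mp h2)
      have heven : Even ((n + 1) / d - 1) := Nat.Odd.sub_odd hodd2 odd_one
      rw [heven.neg_one_pow, mul_one, sub_self]
  rw [Finset.sum_congr rfl key, ← Finset.sum_filter]
  have hfd : ((n + 1).divisors.filter (fun d => 2 ∣ (n + 1) / d)) = m.divisors := by
    rw [← hm]; exact filter_divisors m hm0
  rw [hfd]
  rw [Finset.smul_sum, Finset.smul_sum]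
  refine Finset.sum_congr rfl fun d hd => ?_
  obtain ⟨hdm, -⟩ := Nat.mem_divisors.mp hd
  have hexp : (n + 1) / d = 2 * (m / d) := by
    rw [← hm, Nat.mul_div_assoc 2 hdm]
  rw [hexp, smul_smul, smul_smul]
  congr 1
  have hmQ : ((m : ℚ)) ≠ 0 := Nat.cast_ne_zero.mpr hm0.ne'
  have hNQ : ((n + 1 : ℕ) : ℚ) = 2 * (m : ℚ) := by
    rw [← hm]; push_cast; ring
  rw [hNQ]
  field_simp

lemma odd_case (n : ℕ) (h2 : ¬ 2 ∣ (n + 1)) : fsign n = fL n := by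
  rw [fsign, fL]
  congr 1
  refine Finset.sum_congr rfl fun d hd => ?_
  obtain ⟨hdvd, -⟩ := Nat.mem_divisors.mp hd
  have hnd : ¬ 2 ∣ (n + 1) / d := by
    intro hc
    exact h2 (hc.trans (Nat.div_dvd_of_dvd hdvd))
  have hodd2 : Odd ((n + 1) / d) := Nat.odd_iff.mpr (Nat.two_dvd_ne_zero.mp hnd)
  have heven : Even ((n + 1) / d - 1) := Nat.Odd.sub_odd hodd2 odd_one
  rw [heven.neg_one_pow, mul_one]

lemma step3 (n : ℕ) : fsign n = fL n - gS n := by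
  by_cases h2 : 2 ∣ (n + 1)
  · obtain ⟨m, hm⟩ := h2
    have hm0 : 0 < m := by omega
    have hg : gS n = fS (m - 1) := by
      rw [gS, if_pos ⟨m, hm⟩]
      have he : (n + 1) / 2 - 1 = m - 1 := by omega
      rw [he]
    rw [hg, ← even_case n m hm.symm hm0, sub_sub_cancel]
  · rw [gS, if_neg h2, sub_zero, odd_case n h2]

/-- `∑_{n≥1} (1/n) ∑_{d∣n} μ(d) (−1)^{n/d−1} p_d^{n/d} = L − L[p_1^2]`. -/
theorem signed_lyndon_eq_L_sub_L_square :
    (∑' n : ℕ, (((n + 1 : ℕ) : ℚ))⁻¹ •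
      ∑ d ∈ (n + 1).divisors,
        (((moebius d : ℤ) : ℚ) * (-1 : ℚ) ^ ((n + 1) / d - 1)) •
          Pgen d ^ ((n + 1) / d)) = LyndonL - LyndonLsq := by
  have h1 : (∑' n : ℕ, (((n + 1 : ℕ) : ℚ))⁻¹ •
      ∑ d ∈ (n + 1).divisors,
        (((moebius d : ℤ) : ℚ) * (-1 : ℚ) ^ ((n + 1) / d - 1)) •
          Pgen d ^ ((n + 1) / d)) = ∑' n, fsign n := rfl
  have h2 : LyndonL = ∑' n, fL n := rfl
  have h3 : LyndonLsq = ∑' n, fS n := rfl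
  rw [h1, h2, h3, ← tsum_gS]
  rw [tsum_congr step3]
  exact Summable.tsum_sub summable_fL summable_gS
end

section
/- Witt's formula on the generating-function level: for variables t_1,...,t_ℓ, the evaluation of L = ∑_{n≥1} (1/n) ∑_{d|n} μ(d) p_d^{n/d} at x_1 = t_1, ..., x_ℓ = t_ℓ (all other variables 0) equals the sum of monomials ∑_{w Lyndon word over {1,...,ℓ}} t^w, where t^w = ∏_i t_i^{m_i(w)} and m_i(w) is the number of occurrences of the letter i in w. -/
open ArithmeticFunction

/-- The product topology on `ℚ⟦t_1, ..., t_ℓ⟧`. -/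
noncomputable instance {ℓ : ℕ} : TopologicalSpace (MvPowerSeries (Fin ℓ) ℚ) :=
  Pi.topologicalSpace

namespace WittAux

variable {A : Type*}

/-- `k`-fold concatenation power of a word. -/
def wpow (u : List A) : ℕ → List A
  | 0 => []
  | k+1 => u ++ wpow u k

@[simp] lemma wpow_zero (u : List A) : wpow u 0 = [] := rfl

lemma wpow_succ (u : List A) (k : ℕ) : wpow u (k+1) = u ++ wpow u k := rfl

@[simp] lemma wpow_one (u : List A) : wpow u 1 = u := by simp [wpow]

@[simp] lemma wpow_nil (k : ℕ) : wpow ([] : List A) k = [] := by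
  induction k with
  | zero => rfl
  | succ k ih => simp [wpow_succ, ih]

@[simp] lemma length_wpow (u : List A) (k : ℕ) : (wpow u k).length = k * u.length := by
  induction k with
  | zero => simp
  | succ k ih => simp [wpow_succ, ih]; ring

lemma wpow_add (u : List A) (a b : ℕ) : wpow u (a+b) = wpow u a ++ wpow u b := by
  induction a with
  | zero => simp
  | succ a ih => rw [Nat.succ_add, wpow_succ, wpow_succ, ih, List.append_assoc]

lemma wpow_succ' (u : List A) (k : ℕ) : wpow u (k+1) = wpow u k ++ u := by
  rw [wpow_add u k 1, wpow_one]

lemma wpow_comm (u : List A) (k : ℕ) : u ++ wpow u k = wpow u k ++ u := by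
  rw [← wpow_succ, wpow_succ']

lemma wpow_wpow (u : List A) (a b : ℕ) : wpow (wpow u a) b = wpow u (a*b) := by
  induction b with
  | zero => simp
  | succ b ih => rw [wpow_succ, ih, ← wpow_add, Nat.mul_succ, Nat.add_comm]

lemma comm_aux : ∀ n (u v : List A), u.length + v.length ≤ n → u ++ v = v ++ u →
    ∃ z a b, u = wpow z a ∧ v = wpow z b := by
  intro n
  induction n with
  | zero =>
    intro u v hlen _
    have hu : u = [] := List.length_eq_zero_iff.mp (by omega)
    have hv : v = [] := List.length_eq_zero_iff.mp (by omega)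
    exact ⟨[], 0, 0, by simp [hu], by simp [hv]⟩
  | succ n ih =>
    intro u v hlen h
    rcases eq_or_ne u [] with rfl | hu
    · exact ⟨v, 0, 1, by simp, by simp⟩
    rcases eq_or_ne v [] with rfl | hv
    · exact ⟨u, 1, 0, by simp, by simp⟩
    have hul : 0 < u.length := List.length_pos_iff.mpr hu
    have hvl : 0 < v.length := List.length_pos_iff.mpr hv
    rcases le_total u.length v.length with hle | hle
    · have hpre : v.take u.length = u := by
        have := congrArg (List.take u.length) h
        rw [List.take_append_of_le_length le_rfl, List.take_length,
          List.take_append_of_le_length hle] at this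
        exact this.symm
      set w := v.drop u.length with hw
      have hv2 : v = u ++ w := by rw [← hpre, hw, List.take_append_drop]
      have hcomm : u ++ w = w ++ u := by
        have h2 : u ++ (u ++ w) = (u ++ w) ++ u := by rw [← hv2]; exact h
        rw [List.append_assoc] at h2
        exact List.append_cancel_left h2
      have hwlen : u.length + w.length ≤ n := by
        have : w.length = v.length - u.length := by rw [hw, List.length_drop]
        omega
      obtain ⟨z, a, b, hz1, hz2⟩ := ih u w hwlen hcomm
      exact ⟨z, a, a + b, hz1, by rw [hv2, hz1, hz2, wpow_add]⟩
    · have hpre : u.take v.length = v := by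
        have := congrArg (List.take v.length) h.symm
        rw [List.take_append_of_le_length le_rfl, List.take_length,
          List.take_append_of_le_length hle] at this
        exact this.symm
      set w := u.drop v.length with hw
      have hu2 : u = v ++ w := by rw [← hpre, hw, List.take_append_drop]
      have hcomm : v ++ w = w ++ v := by
        have h2 : v ++ (v ++ w) = (v ++ w) ++ v := by rw [← hu2]; exact h.symm
        rw [List.append_assoc] at h2
        exact List.append_cancel_left h2
      have hwlen : v.length + w.length ≤ n := by
        have : w.length = u.length - v.length := by rw [hw, List.length_drop]
        omega
      obtain ⟨z, a, b, hz1, hz2⟩ := ih v w hwlen hcomm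
      exact ⟨z, a + b, a, by rw [hu2, hz1, hz2, wpow_add], hz1⟩

lemma comm_wpow {u v : List A} (h : u ++ v = v ++ u) :
    ∃ z a b, u = wpow z a ∧ v = wpow z b :=
  comm_aux (u.length + v.length) u v le_rfl h

/-- A word is primitive if it is nonempty and not a proper power. -/
def Primitive (u : List A) : Prop := u ≠ [] ∧ ∀ z k, u = wpow z k → u = z

lemma exists_primitive_aux : ∀ n (w : List A), w.length ≤ n → w ≠ [] →
    ∃ u k, Primitive u ∧ 0 < k ∧ w = wpow u k := by
  intro n
  induction n with
  | zero => intro w h hw; exact absurd (List.length_eq_zero_iff.mp (by omega)) hw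
  | succ n ih =>
    intro w hlen hw
    by_cases hp : Primitive w
    · exact ⟨w, 1, hp, one_pos, by simp⟩
    · rw [Primitive, not_and] at hp
      push_neg at hp
      obtain ⟨z, k, hzk, hne⟩ := hp hw
      have hz : z ≠ [] := by
        rintro rfl; rw [wpow_nil] at hzk; exact hw hzk
      have hzl : 0 < z.length := List.length_pos_iff.mpr hz
      have hk2 : 2 ≤ k := by
        rcases k with _ | _ | k
        · rw [wpow_zero] at hzk; exact absurd hzk hw
        · rw [wpow_one] at hzk; exact absurd hzk hne
        · omega
      have hzlt : z.length < w.length := by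
        have := congrArg List.length hzk
        rw [length_wpow] at this
        nlinarith
      obtain ⟨u, j, hu, hj, hzu⟩ := ih z (by omega) hz
      exact ⟨u, j * k, hu, by positivity, by rw [hzk, hzu, wpow_wpow]⟩

lemma exists_primitive (w : List A) (hw : w ≠ []) :
    ∃ u k, Primitive u ∧ 0 < k ∧ w = wpow u k :=
  exists_primitive_aux w.length w le_rfl hw

lemma prefix_wpow (u : List A) {k : ℕ} (hk : 0 < k) : u <+: wpow u k := by
  rcases k with _ | k
  · omega
  · rw [wpow_succ]; exact List.prefix_append u _

lemma prim_unique {w u v : List A} (hw : w ≠ []) (hu : Primitive u) (hv : Primitive v)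
    {k m : ℕ} (hk : w = wpow u k) (hm : w = wpow v m) : u = v := by
  have hkpos : 0 < k := by
    rcases Nat.eq_zero_or_pos k with rfl | h; · exact absurd hk.symm (by simpa using hw)
    · exact h
  have hmpos : 0 < m := by
    rcases Nat.eq_zero_or_pos m with rfl | h; · exact absurd hm.symm (by simpa using hw)
    · exact h
  rcases eq_or_lt_of_le (show 1 ≤ k by omega) with hk1 | hk2
  · -- k = 1 : w = u
    have : w = u := by rw [hk, ← hk1, wpow_one]
    exact (hu.2 v m (by rw [← this, hm])).symm ▸ (hu.2 v m (by rw [← this, hm]))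
  rcases eq_or_lt_of_le (show 1 ≤ m by omega) with hm1 | hm2
  · have : w = v := by rw [hm, ← hm1, wpow_one]
    exact ((hv.2 u k (by rw [← this, hk]))).symm
  -- now k, m ≥ 2
  have hulen : 0 < u.length := List.length_pos_iff.mpr hu.1
  have hvlen : 0 < v.length := List.length_pos_iff.mpr hv.1
  have hwu : w.length = k * u.length := by rw [hk, length_wpow]
  have hwv : w.length = m * v.length := by rw [hm, length_wpow]
  have hlen : u.length + v.length ≤ w.length := by nlinarith
  have hcomm_u : u ++ w = w ++ u := by
    rw [hk, wpow_comm]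
  have hcomm_v : v ++ w = w ++ v := by
    rw [hm, wpow_comm]
  have h1 : u ++ v <+: w := by
    have hpre : u ++ v <+: u ++ w := (List.prefix_append_right_inj u).mpr
      ((prefix_wpow v hmpos).trans (by rw [← hm]))
    rw [hcomm_u] at hpre
    exact List.prefix_of_prefix_length_le hpre (List.prefix_append w u) (by simpa using hlen)
  have h2 : v ++ u <+: w := by
    have hpre : v ++ u <+: v ++ w := (List.prefix_append_right_inj v).mpr
      ((prefix_wpow u hkpos).trans (by rw [← hk]))
    rw [hcomm_v] at hpre
    exact List.prefix_of_prefix_length_le hpre (List.prefix_append w v) (by simp; omega)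
  have heq : u ++ v = v ++ u := by
    have := List.prefix_of_prefix_length_le h1 h2 (by simp [Nat.add_comm])
    exact this.eq_of_length (by simp [Nat.add_comm])
  obtain ⟨z, a, b, hz1, hz2⟩ := comm_wpow heq
  rw [hu.2 z a hz1, hv.2 z b hz2]


/-! ### Rotations -/

lemma wpow_shift (a b : List A) (k : ℕ) :
    b ++ wpow (a ++ b) k ++ a = wpow (b ++ a) (k+1) := by
  induction k with
  | zero => simp
  | succ k ih =>
    rw [wpow_succ (a ++ b) k, wpow_succ (b ++ a) (k+1)]
    rw [← ih]
    simp [List.append_assoc]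

lemma rotate_wpow (u : List A) (k r : ℕ) (hr : r ≤ u.length) :
    (wpow u k).rotate r = wpow (u.rotate r) k := by
  rcases Nat.eq_zero_or_pos k with rfl | hk
  · simp
  rcases Nat.exists_eq_add_of_lt hk with ⟨j, hj⟩
  simp only [Nat.zero_add] at hj; subst hj
  have hr' : r ≤ (wpow u (j+1)).length := by
    rw [length_wpow]; nlinarith
  rw [List.rotate_eq_drop_append_take hr', List.rotate_eq_drop_append_take hr]
  rw [wpow_succ, List.drop_append_of_le_length hr, List.take_append_of_le_length hr]
  have := wpow_shift (u.take r) (u.drop r) j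
  rw [List.take_append_drop] at this
  rw [List.append_assoc, ← this]
  simp [List.append_assoc]

lemma rotate_wpow_mul (z : List A) (j q : ℕ) :
    (wpow z j).rotate (z.length * q) = wpow z j := by
  induction q with
  | zero => simp
  | succ q ih =>
    rw [Nat.mul_succ, ← List.rotate_rotate, ih, rotate_wpow z j z.length le_rfl,
      List.rotate_length]

lemma rotate_wpow_mod (z : List A) (hz : z ≠ []) (j r : ℕ) :
    (wpow z j).rotate r = wpow (z.rotate (r % z.length)) j := by
  have hzl : 0 < z.length := List.length_pos_iff.mpr hz
  conv_lhs => rw [← Nat.div_add_mod r z.length]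
  rw [← List.rotate_rotate, rotate_wpow_mul,
    rotate_wpow z j _ (le_of_lt (Nat.mod_lt r hzl))]

lemma primitive_rotate {u : List A} (hu : Primitive u) (r : ℕ) : Primitive (u.rotate r) := by
  have hul : 0 < u.length := List.length_pos_iff.mpr hu.1
  constructor
  · rw [Ne, List.rotate_eq_nil_iff]; exact hu.1
  · intro z k hzk
    have hz : z ≠ [] := by
      rintro rfl
      rw [wpow_nil] at hzk
      rw [List.rotate_eq_nil_iff] at hzk
      exact hu.1 hzk
    have hzl : 0 < z.length := List.length_pos_iff.mpr hz
    set s := u.length - r % u.length with hs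
    have hu_eq : u = (wpow z k).rotate s := by
      rw [← hzk]
      rw [← List.rotate_mod u r, List.rotate_rotate]
      have : r % u.length + s = u.length := by
        have := Nat.mod_lt r hul
        omega
      rw [this, List.rotate_length]
    rw [rotate_wpow_mod z hz k s] at hu_eq
    have := hu.2 _ k hu_eq
    have hlen : u.length = k * z.length := by
      have h1 := congrArg List.length hzk
      rw [List.length_rotate, length_wpow] at h1
      exact h1
    have hlen2 : u.length = z.length := by
      rw [this, List.length_rotate]
    have hk1 : k = 1 := by nlinarith
    rw [hzk, hk1, wpow_one]

lemma not_rotate_eq_self {u : List A} (hu : Primitive u) {s : ℕ}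
    (h0 : 0 < s) (hs : s < u.length) (h : u.rotate s = u) : False := by
  have hul : 0 < u.length := List.length_pos_iff.mpr hu.1
  rw [List.rotate_eq_drop_append_take (le_of_lt hs)] at h
  set a := u.take s with ha
  set b := u.drop s with hb
  have hab : a ++ b = u := List.take_append_drop s u
  have hcomm : a ++ b = b ++ a := by rw [hab, h]
  obtain ⟨z, i, j, hz1, hz2⟩ := comm_wpow hcomm
  have hu_eq : u = wpow z (i + j) := by rw [← hab, hz1, hz2, wpow_add]
  have hzeq := hu.2 z (i+j) hu_eq
  have hzl : 0 < z.length := by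
    rw [← hzeq]; exact hul
  have hil : 0 < i := by
    rcases Nat.eq_zero_or_pos i with rfl | h'
    · exfalso
      have : a = [] := by rw [hz1, wpow_zero]
      have : a.length = 0 := by rw [this]; rfl
      rw [ha, List.length_take] at this
      omega
    · exact h'
  have hjl : 0 < j := by
    rcases Nat.eq_zero_or_pos j with rfl | h'
    · exfalso
      have : b = [] := by rw [hz2, wpow_zero]
      have : b.length = 0 := by rw [this]; rfl
      rw [hb, List.length_drop] at this
      omega
    · exact h'
  have : u.length = (i+j) * z.length := by rw [hu_eq, length_wpow]
  rw [← hzeq] at this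
  nlinarith

lemma rotate_inj_of_primitive {v : List A} (hv : Primitive v) {r r' : ℕ}
    (hr : r < v.length) (hr' : r' < v.length) (h : v.rotate r = v.rotate r') : r = r' := by
  rcases le_total r r' with hle | hle
  · by_contra hne
    have h1 : (v.rotate r).rotate (r' - r) = v.rotate r := by
      rw [List.rotate_rotate]
      have : r + (r' - r) = r' := by omega
      rw [this, h]
    exact not_rotate_eq_self (primitive_rotate hv r) (by omega)
      (by rw [List.length_rotate]; omega) h1
  · by_contra hne
    have h1 : (v.rotate r').rotate (r - r') = v.rotate r' := by
      rw [List.rotate_rotate]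
      have : r' + (r - r') = r := by omega
      rw [this, h]
    exact not_rotate_eq_self (primitive_rotate hv r') (by omega)
      (by rw [List.length_rotate]; omega) h1

/-! ### Lexicographic order lemmas -/

variable [LinearOrder A]

lemma lt_is_lex {x y : List A} (h : x < y) : List.Lex (· < ·) x y := h

lemma lex_is_lt {x y : List A} (h : List.Lex (· < ·) x y) : x < y := h

lemma list_lt_asymm {x y : List A} (h : x < y) : ¬ y < x := by
  exact List.lt_asymm h

lemma list_lt_irrefl (x : List A) : ¬ x < x := fun h => list_lt_asymm h h

lemma lt_append_left {x y : List A} (s : List A) (h : x < y) : s ++ x < s ++ y :=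
  List.Lex.append_left _ h s

lemma lt_of_append_left : ∀ (s : List A) {x y : List A}, s ++ x < s ++ y → x < y := by
  intro s
  induction s with
  | nil => intro x y h; exact h
  | cons c s ih =>
    intro x y h
    cases lt_is_lex h with
    | cons h' => exact ih h'
    | rel h' => exact absurd h' (lt_irrefl c)

lemma lt_append_of_ne_nil : ∀ (x : List A) {t : List A}, t ≠ [] → x < x ++ t := by
  intro x
  induction x with
  | nil =>
    intro t ht
    rcases t with _ | ⟨a, t⟩
    · exact absurd rfl ht
    · exact List.Lex.nil
  | cons c x ih =>
    intro t ht
    exact lex_is_lt (List.Lex.cons (lt_is_lex (ih ht)))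

lemma lt_append_of_not_prefix {x y : List A} (h : x < y) (hp : ¬ x <+: y) (s t : List A) :
    x ++ s < y ++ t := by
  have h' : List.Lex (· < ·) x y := h
  induction h' generalizing s t with
  | nil => exact absurd (List.nil_prefix) hp
  | rel h'' => exact List.Lex.rel h''
  | @cons a l₁ l₂ h'' ih =>
    refine List.Lex.cons (ih (lex_is_lt h'') ?_ s t)
    intro hpre
    exact hp (List.cons_prefix_cons.mpr ⟨rfl, hpre⟩)

lemma lt_append_iff_of_length_eq : ∀ {x y s t : List A}, x.length = y.length →
    x ++ s < y ++ t → x < y ∨ (x = y ∧ s < t) := by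
  intro x
  induction x with
  | nil =>
    intro y s t hl h
    rw [List.length_nil] at hl
    rw [List.length_eq_zero_iff.mp hl.symm] at h ⊢
    exact Or.inr ⟨rfl, h⟩
  | cons a x ih =>
    intro y s t hl h
    rcases y with _ | ⟨b, y⟩
    · simp at hl
    cases lt_is_lex h with
    | rel h'' => exact Or.inl (List.Lex.rel h'')
    | cons h'' =>
      rcases ih (by simpa using hl) (lex_is_lt h'') with h3 | ⟨rfl, h4⟩
      · exact Or.inl (List.Lex.cons h3)
      · exact Or.inr ⟨rfl, h4⟩

/-! ### Lyndon words -/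

lemma lyndon_primitive {w : List A} (hw : IsLyndon w) : Primitive w := by
  refine ⟨hw.1, fun z k hzk => ?_⟩
  by_contra hne
  have hz : z ≠ [] := by rintro rfl; rw [wpow_nil] at hzk; exact hw.1 hzk
  have hzl : 0 < z.length := List.length_pos_iff.mpr hz
  have hk2 : 2 ≤ k := by
    rcases k with _ | _ | k
    · rw [wpow_zero] at hzk; exact absurd hzk hw.1
    · rw [wpow_one] at hzk; exact absurd hzk hne
    · omega
  have hwk : w.length = k * z.length := by rw [hzk, length_wpow]
  set s := wpow z (k-1) with hs
  have hdrop : w.drop z.length = s := by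
    have : w = z ++ s := by
      conv_lhs => rw [hzk, show k = 1 + (k-1) by omega]
      rw [wpow_add, wpow_one, hs]
    rw [this, List.drop_left]
  have hlyn := hw.2 z.length hzl (by nlinarith)
  rw [hdrop] at hlyn
  -- but s is a proper prefix of w, so s < w
  have hsw : w = s ++ z := by
    conv_lhs => rw [hzk, show k = (k-1) + 1 by omega]
    rw [wpow_succ', hs]
  have : s < w := by rw [hsw]; exact lt_append_of_ne_nil s hz
  exact list_lt_asymm hlyn this

lemma lyndon_lt_rotate {w : List A} (hw : IsLyndon w) {r : ℕ} (h0 : 0 < r)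
    (hr : r < w.length) : w < w.rotate r := by
  rw [List.rotate_eq_drop_append_take (le_of_lt hr)]
  have hlyn := hw.2 r h0 hr
  have hnp : ¬ w <+: w.drop r := by
    intro hpre
    have := hpre.length_le
    rw [List.length_drop] at this
    omega
  have := lt_append_of_not_prefix hlyn hnp [] (w.take r)
  rwa [List.append_nil] at this

lemma lyndon_rotate_eq {v v' : List A} (hv : IsLyndon v) (hv' : IsLyndon v') {s : ℕ}
    (h : v' = v.rotate s) : v' = v := by
  have hvl : 0 < v.length := List.length_pos_iff.mpr hv.1
  rw [← List.rotate_mod] at h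
  rcases Nat.eq_zero_or_pos (s % v.length) with hz | hpos
  · rw [hz, List.rotate_zero] at h; exact h
  · exfalso
    have hlt : s % v.length < v.length := Nat.mod_lt s hvl
    have h1 : v < v' := by
      rw [h]; exact lyndon_lt_rotate hv hpos hlt
    have hlen : v'.length = v.length := by rw [h, List.length_rotate]
    have h2 : v' < v := by
      have := lyndon_lt_rotate hv' (r := v.length - s % v.length) (by omega) (by omega)
      rw [h, List.rotate_rotate] at this
      have heq : s % v.length + (v.length - s % v.length) = v.length := by omega
      rw [heq, List.rotate_length] at this
      rwa [← h] at this
    exact list_lt_asymm h1 h2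

lemma lyndon_of_lt_rotate {w : List A} (hw : w ≠ [])
    (h : ∀ r, 0 < r → r < w.length → w < w.rotate r) : IsLyndon w := by
  refine ⟨hw, fun i hi hil => ?_⟩
  set a := w.take i with ha
  set b := w.drop i with hb
  have hab : a ++ b = w := List.take_append_drop i w
  have hal : a.length = i := by rw [ha, List.length_take]; omega
  have hbl : b.length = w.length - i := by rw [hb, List.length_drop]
  have hbne : b ≠ [] := by
    intro h'
    have := congrArg List.length h'
    rw [hbl] at this
    simp at this
    omega
  have hane : a ≠ [] := by
    intro h'
    have := congrArg List.length h'
    rw [hal] at this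
    simp at this
    omega
  have hrot : w < b ++ a := by
    have := h i hi hil
    rwa [List.rotate_eq_drop_append_take (le_of_lt hil)] at this
  show w < b
  by_contra hnb
  rcases lt_or_eq_of_le (not_lt.mp hnb) with hblt | hbeq
  · -- b < w
    by_cases hbp : b <+: w
    · -- b is a proper prefix of w
      set t := w.drop b.length with hts
      have hw2 : w = b ++ t := by
        rw [List.prefix_iff_eq_take] at hbp
        conv_lhs => rw [← List.take_append_drop b.length w]
        rw [← hbp, hts]
      have htl : t.length = a.length := by
        rw [hts, List.length_drop, hal, hbl]; omega
      have hta : t < a := by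
        apply lt_of_append_left b
        rw [← hw2]; exact hrot
      have hrot2 : w < t ++ b := by
        have hblen : 0 < b.length := List.length_pos_iff.mpr hbne
        have hblw : b.length < w.length := by omega
        have := h b.length hblen hblw
        rwa [List.rotate_eq_drop_append_take (le_of_lt hblw), ← hts,
          show w.take b.length = b by rw [List.prefix_iff_eq_take] at hbp; exact hbp.symm] at this
      have : a ++ b < t ++ b := by rw [hab]; exact hrot2
      rcases lt_append_iff_of_length_eq (by omega) this with h3 | ⟨heq', h4⟩
      · exact list_lt_asymm hta h3
      · exact list_lt_irrefl b h4
    · -- b not a prefix of w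
      have := lt_append_of_not_prefix hblt hbp a []
      rw [List.append_nil] at this
      exact list_lt_asymm hrot this
  · -- b = w impossible by lengths
    have := congrArg List.length hbeq
    rw [hbl] at this
    omega

lemma exists_lyndon_rotate {u : List A} (hu : Primitive u) :
    ∃ r < u.length, IsLyndon (u.rotate r) := by
  classical
  have hul : 0 < u.length := List.length_pos_iff.mpr hu.1
  set S := (Finset.range u.length).image (u.rotate ·) with hS
  have hSne : S.Nonempty := ⟨u.rotate 0, Finset.mem_image.mpr ⟨0, Finset.mem_range.mpr hul, rfl⟩⟩
  obtain ⟨r, hr, hrv⟩ := Finset.mem_image.mp (S.min'_mem hSne)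
  rw [Finset.mem_range] at hr
  refine ⟨r, hr, ?_⟩
  set v := u.rotate r with hv
  have hvprim : Primitive v := primitive_rotate hu r
  have hvl : v.length = u.length := List.length_rotate u r
  apply lyndon_of_lt_rotate hvprim.1
  intro s hs hsv
  have hmem : v.rotate s ∈ S := by
    rw [hv, List.rotate_rotate, ← List.rotate_mod]
    exact Finset.mem_image.mpr ⟨(r + s) % u.length,
      Finset.mem_range.mpr (Nat.mod_lt _ hul), rfl⟩
  have hle : S.min' hSne ≤ v.rotate s := Finset.min'_le S _ hmem
  rw [← hrv] at hle
  rcases lt_or_eq_of_le hle with hlt | heq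
  · exact hlt
  · exfalso
    exact not_rotate_eq_self hvprim hs (by rw [hvl] at hsv; rwa [hvl]) heq.symm


/-! ### Generating functions -/

section Counting

open MvPowerSeries

noncomputable def T {ℓ : ℕ} (w : List (Fin ℓ)) : MvPowerSeries (Fin ℓ) ℚ :=
  ∏ i : Fin ℓ, (X i : MvPowerSeries (Fin ℓ) ℚ) ^ (w.count i)

@[simp] lemma T_nil {ℓ : ℕ} : T ([] : List (Fin ℓ)) = 1 := by simp [T]

lemma T_append {ℓ : ℕ} (u v : List (Fin ℓ)) : T (u ++ v) = T u * T v := by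
  simp [T, List.count_append, pow_add, Finset.prod_mul_distrib]

lemma T_wpow {ℓ : ℕ} (u : List (Fin ℓ)) (k : ℕ) : T (wpow u k) = T u ^ k := by
  induction k with
  | zero => simp
  | succ k ih => rw [wpow_succ, T_append, ih, ← pow_succ']

lemma T_rotate {ℓ : ℕ} (u : List (Fin ℓ)) (r : ℕ) : T (u.rotate r) = T u := by
  simp [T, (List.rotate_perm u r).count_eq]

lemma T_cons {ℓ : ℕ} (i : Fin ℓ) (w : List (Fin ℓ)) :
    T (i :: w) = (X i : MvPowerSeries (Fin ℓ) ℚ) * T w := by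
  have h : (i :: w) = [i] ++ w := rfl
  rw [h, T_append]
  congr 1
  rw [T, Finset.prod_eq_single i (fun j _ hj => by
    simp [List.count_singleton', hj, Ne.symm hj])]
  · simp [List.count_singleton']
  · intro h'; exact absurd (Finset.mem_univ i) h'

noncomputable def contW {ℓ : ℕ} (w : List (Fin ℓ)) : Fin ℓ →₀ ℕ :=
  ∑ i : Fin ℓ, Finsupp.single i (w.count i)

lemma contW_apply {ℓ : ℕ} (w : List (Fin ℓ)) (i : Fin ℓ) : contW w i = w.count i := by
  classical
  rw [contW, Finsupp.finset_sum_apply]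
  rw [Finset.sum_eq_single i (fun j _ hj => by simp [Finsupp.single_apply, hj])]
  · simp
  · intro h'; exact absurd (Finset.mem_univ i) h'

lemma prod_monomial {ℓ : ℕ} (s : Finset (Fin ℓ)) (e : Fin ℓ → (Fin ℓ →₀ ℕ)) :
    (∏ i ∈ s, (monomial (e i) (1:ℚ) : MvPowerSeries (Fin ℓ) ℚ))
      = monomial (∑ i ∈ s, e i) 1 := by
  classical
  induction s using Finset.induction with
  | empty => simp
  | insert _ _ hx ih =>
    rw [Finset.prod_insert hx, Finset.sum_insert hx, ih, monomial_mul_monomial, one_mul]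

lemma T_monomial {ℓ : ℕ} (w : List (Fin ℓ)) :
    T w = monomial (contW w) 1 := by
  rw [T, contW]
  simp_rw [X_pow_eq]
  exact prod_monomial _ _

lemma coeff_T {ℓ : ℕ} (m : Fin ℓ →₀ ℕ) (w : List (Fin ℓ)) :
    coeff m (T w) = if m = contW w then 1 else 0 := by
  classical
  rw [T_monomial, coeff_monomial]

/-- The finset of all words of length `n`. -/
def wordsF (ℓ n : ℕ) : Finset (List (Fin ℓ)) :=
  (Finset.univ : Finset (Fin n → Fin ℓ)).image List.ofFn

lemma mem_wordsF {ℓ n : ℕ} {w : List (Fin ℓ)} : w ∈ wordsF ℓ n ↔ w.length = n := by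
  constructor
  · intro h
    obtain ⟨f, _, rfl⟩ := Finset.mem_image.mp h
    simp
  · rintro rfl
    exact Finset.mem_image.mpr ⟨w.get, Finset.mem_univ _, List.ofFn_get w⟩

instance {ℓ : ℕ} : DecidablePred (IsLyndon (A := Fin ℓ)) := fun w =>
  decidable_of_iff (w ≠ [] ∧ ∀ i ∈ Finset.range w.length, 0 < i → List.Lex (· < ·) w (w.drop i))
    (by
      constructor
      · rintro ⟨h1, h2⟩
        exact ⟨h1, fun i hi hlt => h2 i (Finset.mem_range.mpr hlt) hi⟩
      · rintro ⟨h1, h2⟩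
        exact ⟨h1, fun i hi hlt => h2 i hlt (Finset.mem_range.mp hi)⟩)

/-- The finset of all Lyndon words of length `p`. -/
noncomputable def lyndonF (ℓ p : ℕ) : Finset (List (Fin ℓ)) :=
  (wordsF ℓ p).filter IsLyndon

lemma mem_lyndonF {ℓ p : ℕ} {w : List (Fin ℓ)} :
    w ∈ lyndonF ℓ p ↔ w.length = p ∧ IsLyndon w := by
  rw [lyndonF, Finset.mem_filter, mem_wordsF]

lemma wordsF_zero {ℓ : ℕ} : wordsF ℓ 0 = {[]} := by
  ext w; simp [mem_wordsF, List.length_eq_zero_iff]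

lemma wordsF_succ {ℓ k : ℕ} :
    wordsF ℓ (k+1) = ((Finset.univ : Finset (Fin ℓ)) ×ˢ wordsF ℓ k).image
      (fun p => p.1 :: p.2) := by
  ext w
  rw [Finset.mem_image, mem_wordsF]
  constructor
  · intro h
    rcases w with _ | ⟨a, w'⟩
    · simp at h
    · refine ⟨(a, w'), ?_, rfl⟩
      rw [Finset.mem_product, mem_wordsF]
      exact ⟨Finset.mem_univ a, by simpa using h⟩
  · rintro ⟨⟨a, w'⟩, hw', rfl⟩
    rw [Finset.mem_product, mem_wordsF] at hw'
    simp [hw'.2]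

lemma expand (ℓ d k : ℕ) :
    (∑ i : Fin ℓ, (X i : MvPowerSeries (Fin ℓ) ℚ) ^ d) ^ k
      = ∑ w ∈ wordsF ℓ k, T w ^ d := by
  induction k with
  | zero => simp [wordsF_zero]
  | succ k ih =>
    rw [pow_succ, ih, wordsF_succ, Finset.sum_image
      (fun p _ q _ h => by
        rcases p with ⟨a, u⟩; rcases q with ⟨b, v⟩
        simpa using h)]
    rw [Finset.sum_product, Finset.sum_mul]
    rw [Finset.sum_comm]
    refine Finset.sum_congr rfl fun i _ => ?_
    rw [Finset.mul_sum]
    refine Finset.sum_congr rfl fun w _ => ?_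
    rw [T_cons, mul_pow, mul_comm]

lemma star (ℓ n d : ℕ) (hn : 0 < n) :
    ∑ w ∈ wordsF ℓ n, T w ^ d =
      ∑ p ∈ n.divisors, ∑ v ∈ lyndonF ℓ p, p • T v ^ (n / p * d) := by
  classical
  have hconv : ∀ p ∈ n.divisors, (∑ v ∈ lyndonF ℓ p, p • T v ^ (n / p * d))
      = ∑ x ∈ lyndonF ℓ p ×ˢ Finset.range p, T x.1 ^ (n / p * d) := by
    intro p _
    rw [Finset.sum_product]
    exact Finset.sum_congr rfl fun v _ => by simp
  rw [Finset.sum_congr rfl hconv, Finset.sum_sigma']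
  refine (Finset.sum_bij (fun x _ => wpow ((x.2.1).rotate x.2.2) (n / x.1)) ?_ ?_ ?_ ?_).symm
  · -- membership
    rintro ⟨p, v, r⟩ hx
    simp only [Finset.mem_sigma, Finset.mem_product, Finset.mem_range, Nat.mem_divisors] at hx
    obtain ⟨⟨hpn, hn0⟩, hv, hr⟩ := hx
    obtain ⟨hvl, _⟩ := mem_lyndonF.mp hv
    rw [mem_wordsF, length_wpow, List.length_rotate, hvl]
    exact Nat.div_mul_cancel hpn
  · -- injectivity
    rintro ⟨p, v, r⟩ hx ⟨p', v', r'⟩ hx' heq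
    simp only [Finset.mem_sigma, Finset.mem_product, Finset.mem_range, Nat.mem_divisors] at hx hx'
    obtain ⟨⟨hpn, hn0⟩, hv, hr⟩ := hx
    obtain ⟨⟨hpn', _⟩, hv', hr'⟩ := hx'
    obtain ⟨hvl, hvlyn⟩ := mem_lyndonF.mp hv
    obtain ⟨hvl', hvlyn'⟩ := mem_lyndonF.mp hv'
    have hppos : 0 < p := Nat.pos_of_dvd_of_pos hpn hn
    have hppos' : 0 < p' := Nat.pos_of_dvd_of_pos hpn' hn
    have hkpos : 0 < n / p := Nat.div_pos (Nat.le_of_dvd hn hpn) hppos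
    have hkpos' : 0 < n / p' := Nat.div_pos (Nat.le_of_dvd hn hpn') hppos'
    have hprim : Primitive (v.rotate r) := primitive_rotate (lyndon_primitive hvlyn) r
    have hprim' : Primitive (v'.rotate r') := primitive_rotate (lyndon_primitive hvlyn') r'
    have hwne : wpow (v.rotate r) (n / p) ≠ [] := by
      intro h
      have := congrArg List.length h
      rw [length_wpow, List.length_rotate, hvl] at this
      rcases Nat.mul_eq_zero.mp this with h1 | h1 <;> omega
    have hueq : v.rotate r = v'.rotate r' :=
      prim_unique hwne hprim hprim' rfl heq
    have hpp : p = p' := by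
      have := congrArg List.length hueq
      rwa [List.length_rotate, List.length_rotate, hvl, hvl'] at this
    subst hpp
    have hveq : v' = v := by
      refine lyndon_rotate_eq hvlyn hvlyn' (s := r + (p - r')) ?_
      have h1 : v' = (v'.rotate r').rotate (p - r') := by
        rw [List.rotate_rotate]
        have h2 : r' + (p - r') = p := by omega
        rw [h2, ← hvl', List.rotate_length]
      rw [h1, ← hueq, List.rotate_rotate]
    subst hveq
    have hrr : r = r' := by
      refine rotate_inj_of_primitive (lyndon_primitive hvlyn) ?_ ?_ hueq <;> omega
    subst hrr
    rfl
  · -- surjectivity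
    intro w hw
    have hwl : w.length = n := mem_wordsF.mp hw
    have hwne : w ≠ [] := by
      intro h; rw [h] at hwl; simp at hwl; omega
    obtain ⟨u, k, hu, hk, hwu⟩ := exists_primitive w hwne
    have hul : 0 < u.length := List.length_pos_iff.mpr hu.1
    have hn_eq : n = k * u.length := by rw [← hwl, hwu, length_wpow]
    obtain ⟨r, hr, hlyn⟩ := exists_lyndon_rotate hu
    set p := u.length with hp
    set v := u.rotate r with hvdef
    have hvl : v.length = p := List.length_rotate u r
    have hndp : n / p = k := Nat.div_eq_of_eq_mul_left hul hn_eq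
    refine ⟨⟨p, v, (p - r) % p⟩, ?_, ?_⟩
    · simp only [Finset.mem_sigma, Finset.mem_product, Finset.mem_range, Nat.mem_divisors]
      exact ⟨⟨⟨k, by rw [hn_eq, Nat.mul_comm]⟩, by omega⟩, mem_lyndonF.mpr ⟨hvl, hlyn⟩,
        Nat.mod_lt _ hul⟩
    · show wpow (v.rotate ((p - r) % p)) (n / p) = w
      have hrot : v.rotate ((p - r) % p) = u := by
        rw [hvdef, List.rotate_rotate, ← List.rotate_mod]
        have : (r + (p - r) % p) % p = 0 := by
          rcases Nat.eq_zero_or_pos r with rfl | hrpos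
          · simp
          · rw [Nat.mod_eq_of_lt (show p - r < p by omega)]
            have : r + (p - r) = p := by omega
            rw [this, Nat.mod_self]
        rw [this, List.rotate_zero]
      rw [hrot, hndp, ← hwu]
  · -- values
    rintro ⟨p, v, r⟩ _
    rw [T_wpow, T_rotate, ← pow_mul]

lemma divisors_swap {M : Type*} [AddCommMonoid M] (N : ℕ) (F : ℕ → ℕ → M) :
    ∑ d ∈ N.divisors, ∑ p ∈ (N/d).divisors, F d p
      = ∑ p ∈ N.divisors, ∑ d ∈ (N/p).divisors, F d p := by
  rw [Finset.sum_sigma', Finset.sum_sigma']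
  refine Finset.sum_nbij' (fun x => ⟨x.2, x.1⟩) (fun x => ⟨x.2, x.1⟩) ?_ ?_ ?_ ?_ ?_
  · rintro ⟨d, p⟩ hx
    simp only [Finset.mem_sigma, Nat.mem_divisors] at hx ⊢
    obtain ⟨⟨hd, hN⟩, hp, _⟩ := hx
    have hpN : p ∣ N := hp.trans (Nat.div_dvd_of_dvd hd)
    have hdp : d * p ∣ N := (Nat.dvd_div_iff_mul_dvd hd).mp hp
    refine ⟨⟨hpN, hN⟩, ?_, ?_⟩
    · rw [Nat.dvd_div_iff_mul_dvd hpN, Nat.mul_comm]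
      exact hdp
    · have : 0 < N / p := Nat.div_pos (Nat.le_of_dvd (Nat.pos_of_ne_zero hN) hpN)
        (Nat.pos_of_dvd_of_pos hpN (Nat.pos_of_ne_zero hN))
      omega
  · rintro ⟨p, d⟩ hx
    simp only [Finset.mem_sigma, Nat.mem_divisors] at hx ⊢
    obtain ⟨⟨hp, hN⟩, hd, _⟩ := hx
    have hdN : d ∣ N := hd.trans (Nat.div_dvd_of_dvd hp)
    have hdp : p * d ∣ N := (Nat.dvd_div_iff_mul_dvd hp).mp hd
    refine ⟨⟨hdN, hN⟩, ?_, ?_⟩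
    · rw [Nat.dvd_div_iff_mul_dvd hdN, Nat.mul_comm]
      exact hdp
    · have : 0 < N / d := Nat.div_pos (Nat.le_of_dvd (Nat.pos_of_ne_zero hN) hdN)
        (Nat.pos_of_dvd_of_pos hdN (Nat.pos_of_ne_zero hN))
      omega
  · rintro ⟨d, p⟩ _; rfl
  · rintro ⟨p, d⟩ _; rfl
  · rintro ⟨d, p⟩ _; rfl

lemma sum_moebius_divisors (M : ℕ) :
    ∑ d ∈ M.divisors, ((ArithmeticFunction.moebius d : ℤ) : ℚ)
      = if M = 1 then 1 else 0 := by
  have h1 : ∑ d ∈ M.divisors, ArithmeticFunction.moebius d = if M = 1 then 1 else 0 := by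
    rcases Nat.eq_zero_or_pos M with rfl | hM
    · simp
    · rw [← ArithmeticFunction.coe_mul_zeta_apply,
        ArithmeticFunction.moebius_mul_coe_zeta,
        ArithmeticFunction.one_apply]
  have h2 := congrArg (fun z : ℤ => (z : ℚ)) h1
  push_cast at h2
  split_ifs with h <;> simp [h] at h2 ⊢ <;> exact h2

lemma perN (ℓ N : ℕ) (hN : 0 < N) :
    ((N : ℚ))⁻¹ • ∑ d ∈ N.divisors, ((ArithmeticFunction.moebius d : ℤ) : ℚ) •
        (∑ i : Fin ℓ, (MvPowerSeries.X i : MvPowerSeries (Fin ℓ) ℚ) ^ d) ^ (N / d)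
      = ∑ v ∈ lyndonF ℓ N, T v := by
  classical
  have step1 : ∀ d ∈ N.divisors, ((ArithmeticFunction.moebius d : ℤ) : ℚ) •
        (∑ i : Fin ℓ, (MvPowerSeries.X i : MvPowerSeries (Fin ℓ) ℚ) ^ d) ^ (N / d)
      = ∑ p ∈ (N/d).divisors, ∑ v ∈ lyndonF ℓ p,
          ((ArithmeticFunction.moebius d : ℤ) : ℚ) • (p • T v ^ (N / p)) := by
    intro d hd
    rw [Nat.mem_divisors] at hd
    have hdpos : 0 < d := Nat.pos_of_dvd_of_pos hd.1 hN
    have hNd : 0 < N / d := Nat.div_pos (Nat.le_of_dvd hN hd.1) hdpos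
    rw [expand, star ℓ (N/d) d hNd, Finset.smul_sum]
    refine Finset.sum_congr rfl fun p hp => ?_
    rw [Finset.smul_sum]
    refine Finset.sum_congr rfl fun v _ => ?_
    rw [Nat.mem_divisors] at hp
    have hp1 : p ∣ N / d := hp.1
    have hdp : d * p ∣ N := (Nat.dvd_div_iff_mul_dvd hd.1).mp hp1
    have hpN : p ∣ N := hp1.trans (Nat.div_dvd_of_dvd hd.1)
    have hdNp : d ∣ N / p := by
      rw [Nat.dvd_div_iff_mul_dvd hpN, Nat.mul_comm]
      exact hdp
    have hexp : N / d / p * d = N / p := by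
      rw [Nat.div_div_eq_div_mul,
        show N / (d * p) = N / p / d by rw [Nat.mul_comm, ← Nat.div_div_eq_div_mul],
        Nat.div_mul_cancel hdNp]
    rw [hexp]
  rw [Finset.sum_congr rfl step1, divisors_swap]
  have step2 : ∀ p ∈ N.divisors, (∑ d ∈ (N/p).divisors, ∑ v ∈ lyndonF ℓ p,
        ((ArithmeticFunction.moebius d : ℤ) : ℚ) • (p • T v ^ (N / p)))
      = if p = N then (N : ℚ) • ∑ v ∈ lyndonF ℓ N, T v else 0 := by
    intro p hp
    rw [Nat.mem_divisors] at hp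
    have hppos : 0 < p := Nat.pos_of_dvd_of_pos hp.1 hN
    rw [Finset.sum_comm]
    have hcollapse : ∀ v ∈ lyndonF ℓ p,
        (∑ d ∈ (N/p).divisors, ((ArithmeticFunction.moebius d : ℤ) : ℚ) • (p • T v ^ (N / p)))
        = (if N / p = 1 then (1:ℚ) else 0) • (p • T v ^ (N / p)) := by
      intro v _
      rw [← Finset.sum_smul, sum_moebius_divisors]
    rw [Finset.sum_congr rfl hcollapse]
    have hmul : p * (N / p) = N := Nat.mul_div_cancel' hp.1
    by_cases hq : N / p = 1
    · have hpN : p = N := by rw [hq, Nat.mul_one] at hmul; exact hmul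
      subst hpN
      rw [if_pos rfl, Finset.smul_sum]
      refine Finset.sum_congr rfl fun v _ => ?_
      rw [if_pos hq, one_smul, hq, pow_one, Nat.cast_smul_eq_nsmul]
    · have hpN : p ≠ N := by
        intro h; subst h; exact hq (Nat.div_self hN)
      rw [if_neg hpN]
      simp [hq]
  rw [Finset.sum_congr rfl step2, Finset.sum_ite_eq' N.divisors N
    (fun _ => (N : ℚ) • ∑ v ∈ lyndonF ℓ N, T v)]
  rw [if_pos (Nat.mem_divisors.mpr ⟨dvd_rfl, by omega⟩)]
  rw [smul_smul, inv_mul_cancel₀ (show ((N:ℚ)) ≠ 0 by exact_mod_cast hN.ne'), one_smul]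

end Counting

/-! ### Topological assembly -/

section Final

open MvPowerSeries

instance {ℓ : ℕ} : T2Space (MvPowerSeries (Fin ℓ) ℚ) :=
  inferInstanceAs (T2Space ((Fin ℓ →₀ ℕ) → ℚ))

def wt {ℓ : ℕ} (m : Fin ℓ →₀ ℕ) : ℕ := ∑ i : Fin ℓ, m i

lemma length_eq_sum_count {ℓ : ℕ} (w : List (Fin ℓ)) :
    ∑ i : Fin ℓ, w.count i = w.length := by
  induction w with
  | nil => simp
  | cons a w ih =>
    simp only [List.count_cons, beq_iff_eq]
    rw [Finset.sum_add_distrib, ih]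
    simp

lemma wt_contW {ℓ : ℕ} (w : List (Fin ℓ)) : wt (contW w) = w.length := by
  simp [wt, contW_apply, length_eq_sum_count]

lemma lyndonF_zero {ℓ : ℕ} : lyndonF ℓ 0 = ∅ := by
  ext w
  rw [mem_lyndonF]
  simp only [Finset.notMem_empty, iff_false, not_and]
  intro hl hlyn
  exact hlyn.1 (List.length_eq_zero_iff.mp hl)

lemma coeff_sum_lyndonF {ℓ : ℕ} (m : Fin ℓ →₀ ℕ) (n : ℕ) (h : n ≠ wt m) :
    MvPowerSeries.coeff m (∑ v ∈ lyndonF ℓ n, T v) = 0 := by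
  rw [map_sum]
  apply Finset.sum_eq_zero
  intro v hv
  rw [coeff_T, if_neg]
  intro hm
  apply h
  rw [← (mem_lyndonF.mp hv).1, ← wt_contW v, hm]

noncomputable def B (ℓ : ℕ) : MvPowerSeries (Fin ℓ) ℚ :=
  fun m => MvPowerSeries.coeff m (∑ v ∈ lyndonF ℓ (wt m), T v)

lemma hasSum_A (ℓ : ℕ) :
    HasSum (fun n : ℕ => ∑ v ∈ lyndonF ℓ (n+1), T v) (B ℓ) := by
  apply Pi.hasSum.mpr
  intro m
  have hoff : ∀ n : ℕ, n ≠ wt m - 1 →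
      MvPowerSeries.coeff m (∑ v ∈ lyndonF ℓ (n+1), T v) = 0 := by
    intro n hn
    exact coeff_sum_lyndonF m (n+1) (by omega)
  have hs := hasSum_single
    (f := fun n : ℕ => MvPowerSeries.coeff m (∑ v ∈ lyndonF ℓ (n+1), T v))
    (wt m - 1) hoff
  have hval : MvPowerSeries.coeff m (∑ v ∈ lyndonF ℓ (wt m - 1 + 1), T v) = B ℓ m := by
    rcases Nat.eq_zero_or_pos (wt m) with h0 | hpos
    · rw [coeff_sum_lyndonF m _ (by omega)]
      show (0:ℚ) = MvPowerSeries.coeff m (∑ v ∈ lyndonF ℓ (wt m), T v)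
      rw [h0, lyndonF_zero]
      simp
    · have h1 : wt m - 1 + 1 = wt m := by omega
      rw [h1]
      rfl
  exact hval ▸ hs

lemma hasSum_L (ℓ : ℕ) :
    HasSum (fun w : {w : List (Fin ℓ) // IsLyndon w} => T w.1) (B ℓ) := by
  apply Pi.hasSum.mpr
  intro m
  classical
  set s : Finset {w : List (Fin ℓ) // IsLyndon w} :=
    (lyndonF ℓ (wt m)).attach.map ⟨fun x => ⟨x.1, (mem_lyndonF.mp x.2).2⟩,
      fun a b h => Subtype.ext (by have := congrArg Subtype.val h; exact this)⟩ with hsdef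
  have hout : ∀ w : {w : List (Fin ℓ) // IsLyndon w}, w ∉ s →
      MvPowerSeries.coeff m (T w.1) = 0 := by
    intro w hw
    rw [coeff_T, if_neg]
    intro hm
    apply hw
    rw [hsdef, Finset.mem_map]
    have hlen : w.1.length = wt m := by rw [← wt_contW w.1, ← hm]
    refine ⟨⟨w.1, mem_lyndonF.mpr ⟨hlen, w.2⟩⟩, Finset.mem_attach _ _, ?_⟩
    exact Subtype.ext rfl
  have hsum := hasSum_sum_of_ne_finset_zero (L := SummationFilter.unconditional _)
    (f := fun w : {w : List (Fin ℓ) // IsLyndon w} => MvPowerSeries.coeff m (T w.1)) hout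
  have hid : ∑ w ∈ s, MvPowerSeries.coeff m (T w.1) = B ℓ m := by
    rw [hsdef, Finset.sum_map]
    show ∑ x ∈ (lyndonF ℓ (wt m)).attach, MvPowerSeries.coeff m (T x.1) = _
    rw [Finset.sum_attach (lyndonF ℓ (wt m)) (fun v => MvPowerSeries.coeff m (T v))]
    show _ = MvPowerSeries.coeff m (∑ v ∈ lyndonF ℓ (wt m), T v)
    rw [map_sum]
  exact hid ▸ hsum

end Final

end WittAux

/-- **Witt's formula**, generating-function form: evaluating the total Lyndon
symmetric function `L = ∑_{n≥1} (1/n) ∑_{d∣n} μ(d) p_d^{n/d}` at the variables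
`t_1, ..., t_ℓ` (so that `p_d` becomes `t_1^d + ⋯ + t_ℓ^d`) yields
`∑_{w Lyndon word over {1,...,ℓ}} t^w`, where `t^w = ∏_i t_i^{m_i(w)}`. -/
theorem witt_formula (ℓ : ℕ) :
    (∑' n : ℕ, (((n + 1 : ℕ) : ℚ))⁻¹ •
        ∑ d ∈ (n + 1).divisors, ((moebius d : ℤ) : ℚ) •
          (∑ i : Fin ℓ, MvPowerSeries.X i ^ d) ^ ((n + 1) / d)) =
      ∑' w : {w : List (Fin ℓ) // IsLyndon w},
        ∏ i : Fin ℓ, (MvPowerSeries.X i : MvPowerSeries (Fin ℓ) ℚ) ^ (w.1.count i) := by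
  have h1 : ∀ n : ℕ, (((n + 1 : ℕ) : ℚ))⁻¹ •
      ∑ d ∈ (n + 1).divisors, ((moebius d : ℤ) : ℚ) •
        (∑ i : Fin ℓ, MvPowerSeries.X i ^ d) ^ ((n + 1) / d)
      = ∑ v ∈ WittAux.lyndonF ℓ (n+1), WittAux.T v :=
    fun n => WittAux.perN ℓ (n+1) (Nat.succ_pos n)
  calc (∑' n : ℕ, (((n + 1 : ℕ) : ℚ))⁻¹ •
        ∑ d ∈ (n + 1).divisors, ((moebius d : ℤ) : ℚ) •
          (∑ i : Fin ℓ, MvPowerSeries.X i ^ d) ^ ((n + 1) / d))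
      = ∑' n : ℕ, ∑ v ∈ WittAux.lyndonF ℓ (n+1), WittAux.T v := tsum_congr h1
    _ = WittAux.B ℓ := (WittAux.hasSum_A ℓ).tsum_eq
    _ = ∑' w : {w : List (Fin ℓ) // IsLyndon w},
        ∏ i : Fin ℓ, (MvPowerSeries.X i : MvPowerSeries (Fin ℓ) ℚ) ^ (w.1.count i) :=
        ((WittAux.hasSum_L ℓ).tsum_eq).symm
end

section
/- For each ℓ ≥ 1, the map sending a word w over {1,...,ℓ} to the function φ(w): Lyndon({1,...,ℓ}) → ℕ, where φ(w)(v) is the number of times the Lyndon word v appears in the Lyndon factorization of w, is a bijection from words over {1,...,ℓ} to finitely supported functions from Lyndon words over {1,...,ℓ} to ℕ. -/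
namespace LyndonAux

variable {A : Type*} [LinearOrder A]

theorem lt_append_of_lt {b a : List A} (h : b < a) (c : List A) : b < a ++ c := by
  change List.Lex _ _ _ at h ⊢
  induction h with
  | nil => exact List.Lex.nil
  | cons _ ih => exact List.Lex.cons ih
  | rel h => exact List.Lex.rel h

theorem self_lt_append (l : List A) {r : List A} (hr : r ≠ []) : l < l ++ r := by
  change List.Lex _ _ _
  obtain ⟨x, r, rfl⟩ := List.exists_cons_of_ne_nil hr
  induction l with
  | nil => exact List.Lex.nil
  | cons a l ih => exact List.Lex.cons ih

theorem self_le_append (l r : List A) : l ≤ l ++ r := by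
  rcases eq_or_ne r [] with rfl | hr
  · simp
  · exact le_of_lt (self_lt_append l hr)

theorem le_append_of_le {b a : List A} (h : b ≤ a) (c : List A) : b ≤ a ++ c := by
  rcases eq_or_lt_of_le h with rfl | h'
  · exact self_le_append b c
  · exact le_of_lt (lt_append_of_lt h' c)

theorem lyndon_lt_suffix {m t : List A} (hm : IsLyndon m) (ht : t <:+ m)
    (hne : t ≠ []) (hnem : t ≠ m) : m < t := by
  obtain ⟨u, hu⟩ := ht
  have hdrop : m.drop u.length = t := by rw [← hu, List.drop_left]
  have hu0 : u ≠ [] := by rintro rfl; simp at hu; exact hnem hu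
  have hlen : u.length < m.length := by
    rw [← hu, List.length_append]
    have : 0 < t.length := List.length_pos_iff.mpr hne
    omega
  have := hm.2 u.length (by simpa [List.length_pos_iff] using hu0) hlen
  rwa [hdrop] at this

theorem suffix_split {t a b : List A} (h : t <:+ a ++ b) :
    t <:+ b ∨ ∃ s, s <:+ a ∧ s ≠ [] ∧ t = s ++ b := by
  obtain ⟨u, hu⟩ := h
  rcases le_or_gt a.length u.length with hle | hlt
  · left
    refine ⟨u.drop a.length, ?_⟩
    have : (u ++ t).drop a.length = (a ++ b).drop a.length := by rw [hu]
    rwa [List.drop_append_of_le_length hle, List.drop_left] at this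
  · right
    refine ⟨a.drop u.length, List.drop_suffix _ _, ?_, ?_⟩
    · simp only [ne_eq, List.drop_eq_nil_iff]
      omega
    · have : (u ++ t).drop u.length = (a ++ b).drop u.length := by rw [hu]
      rwa [List.drop_left, List.drop_append_of_le_length (le_of_lt hlt)] at this

end LyndonAux

namespace LyndonAux
variable {A : Type*} [LinearOrder A]

theorem min_suffix : ∀ (L : List (List A)) (m : List A),
    (∀ v ∈ L ++ [m], IsLyndon v) → (L ++ [m]).Chain' (fun a b => b ≤ a) →
    ∀ t, t <:+ (L ++ [m]).flatten → t ≠ [] → t ≠ m → m < t := by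
  intro L
  induction L with
  | nil =>
    intro m hall _ t ht hne hnem
    simp only [List.nil_append, List.flatten_cons, List.flatten_nil, List.append_nil] at ht
    exact lyndon_lt_suffix (hall m (by simp)) ht hne hnem
  | cons a L ih =>
    intro m hall hchain t ht hne hnem
    rw [List.cons_append, List.flatten_cons] at ht
    rcases suffix_split ht with h | ⟨s, hs, hsne, rfl⟩
    · exact ih m (fun v hv => hall v (by simp [hv])) hchain.tail t h hne hnem
    · haveI : IsTrans (List A) (fun a b : List A => b ≤ a) :=
        ⟨fun _ _ _ h1 h2 => le_trans h2 h1⟩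
      have hpw := (List.isChain_iff_pairwise.mp hchain)
      have hma : m ≤ a := (List.pairwise_cons.mp hpw).1 m (by simp)
      have hrest : (L ++ [m]).flatten ≠ [] := by
        have hmnil : m ≠ [] := (hall m (by simp)).1
        simp only [ne_eq, List.flatten_eq_nil_iff]
        intro h; exact hmnil (h m (by simp))
      rcases eq_or_ne s a with rfl | hsa
      · exact lt_of_le_of_lt hma (self_lt_append s hrest)
      · have halyn : IsLyndon a := hall a (by simp)
        have h1 : a < s := lyndon_lt_suffix halyn hs hsne hsa
        calc m ≤ a := hma
          _ < s := h1
          _ ≤ s ++ (L ++ [m]).flatten := self_le_append _ _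

theorem unique : ∀ (L M : List (List A)),
    (∀ v ∈ L, IsLyndon v) → L.Chain' (fun a b => b ≤ a) →
    (∀ v ∈ M, IsLyndon v) → M.Chain' (fun a b => b ≤ a) →
    L.flatten = M.flatten → L = M := by
  intro L
  induction L using List.reverseRecOn with
  | nil =>
    intro M _ _ hM _ hflat
    cases M with
    | nil => rfl
    | cons b M =>
      exfalso
      simp only [List.flatten_nil] at hflat
      have : b = [] := by
        have := hflat.symm
        rw [List.flatten_cons, List.append_eq_nil_iff] at this
        exact this.1
      exact (hM b (by simp)).1 this
  | append_singleton L m ihL =>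
    intro M hLl hLc hMl hMc hflat
    cases M using List.reverseRecOn with
    | nil =>
      exfalso
      simp only [List.flatten_nil] at hflat
      have : m = [] := by
        rw [List.flatten_append, List.flatten_cons, List.flatten_nil,
          List.append_nil, List.append_eq_nil_iff] at hflat
        exact hflat.2
      exact (hLl m (by simp)).1 this
    | append_singleton M m' _ =>
      have hmm' : m = m' := by
        by_contra hne
        have hm'suff : m' <:+ (L ++ [m]).flatten := by
          rw [hflat, List.flatten_append]
          simp
        have h1 : m < m' :=
          min_suffix L m hLl hLc m' hm'suff (hMl m' (by simp)).1 (Ne.symm hne)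
        have hmsuff : m <:+ (M ++ [m']).flatten := by
          rw [← hflat, List.flatten_append]
          simp
        have h2 : m' < m :=
          min_suffix M m' hMl hMc m hmsuff (hLl m (by simp)).1 hne
        exact absurd h1 (not_lt_of_gt h2)
      subst hmm'
      have hLM : L.flatten = M.flatten := by
        rw [List.flatten_append, List.flatten_append] at hflat
        exact List.append_cancel_right hflat
      haveI : IsTrans (List A) (fun a b : List A => b ≤ a) :=
        ⟨fun _ _ _ h1 h2 => le_trans h2 h1⟩
      have hLc' : L.Chain' (fun a b => b ≤ a) :=
        hLc.sublist (List.sublist_append_left _ _)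
      have hMc' : M.Chain' (fun a b => b ≤ a) :=
        hMc.sublist (List.sublist_append_left _ _)
      rw [ihL M (fun v hv => hLl v (by simp [hv])) hLc'
        (fun v hv => hMl v (by simp [hv])) hMc' hLM]
end LyndonAux

/-- Given the (unique, by Chen–Fox–Lyndon) Lyndon factorization `fact w` of each word
`w` over `{1, ..., ℓ}`, the map `φ` sending a word `w` to the function recording how
many times each Lyndon word appears in the Lyndon factorization of `w` is a bijection
from words over `{1, ..., ℓ}` onto the finitely supported functions from Lyndon words
over `{1, ..., ℓ}` to `ℕ`. -/
theorem lyndon_factorization_count_bijective (ℓ : ℕ) (hl : 1 ≤ ℓ)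
    (fact : List (Fin ℓ) → List (List (Fin ℓ)))
    (hfact : ∀ w, (∀ v ∈ fact w, IsLyndon v) ∧
      (fact w).Chain' (fun a b => b ≤ a) ∧ (fact w).flatten = w) :
    Set.BijOn
      (fun w => fun v : {v : List (Fin ℓ) // IsLyndon v} => (fact w).count v.1)
      Set.univ
      {g : {v : List (Fin ℓ) // IsLyndon v} → ℕ | (Function.support g).Finite} := by

  classical
  have hbeq : (List.instBEq : BEq (List (Fin ℓ))) = instBEqOfDecidableEq :=
    lawful_beq_subsingleton _ _
  haveI instT : IsTrans (List (Fin ℓ)) (fun a b => b ≤ a) :=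
    ⟨fun _ _ _ h1 h2 => le_trans h2 h1⟩
  haveI instA : IsAntisymm (List (Fin ℓ)) (fun a b => b ≤ a) :=
    ⟨fun _ _ h1 h2 => le_antisymm h2 h1⟩
  haveI instTot : IsTotal (List (Fin ℓ)) (fun a b => b ≤ a) :=
    ⟨fun a b => le_total b a⟩
  refine ⟨?_, ?_, ?_⟩
  · -- MapsTo
    intro w _
    simp only [Set.mem_setOf_eq]
    apply Set.Finite.subset
      (Set.Finite.preimage (Set.injOn_of_injective Subtype.val_injective)
        (fact w).finite_toSet)
    intro v hv
    simp only [Function.mem_support] at hv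
    have : v.1 ∈ fact w := by
      by_contra hmem
      exact hv (List.count_eq_zero.mpr hmem)
    simpa using this
  · -- InjOn
    intro w1 _ w2 _ h
    have hperm : List.Perm (fact w1) (fact w2) := by
      rw [List.perm_iff_count]
      intro a
      by_cases ha : IsLyndon a
      · exact congrFun h ⟨a, ha⟩
      · have e1 : List.count a (fact w1) = 0 := by
          rw [List.count_eq_zero]; exact fun hm => ha ((hfact w1).1 a hm)
        have e2 : List.count a (fact w2) = 0 := by
          rw [List.count_eq_zero]; exact fun hm => ha ((hfact w2).1 a hm)
        rw [e1, e2]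
    have heq : fact w1 = fact w2 :=
      List.Perm.eq_of_pairwise'
        (List.isChain_iff_pairwise.mp (hfact w1).2.1)
        (List.isChain_iff_pairwise.mp (hfact w2).2.1) hperm
    rw [← (hfact w1).2.2, ← (hfact w2).2.2, heq]
  · -- SurjOn
    rintro g hg
    simp only [Set.mem_setOf_eq] at hg
    set S := hg.toFinset with hS
    set Mst : Multiset (List (Fin ℓ)) :=
      S.val.bind (fun v => Multiset.replicate (g v) v.1) with hMst
    set L := Mst.sort (fun a b => b ≤ a) with hL
    have hLperm : (L : Multiset (List (Fin ℓ))) = Mst := Multiset.sort_eq _ _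
    have hLmem : ∀ v ∈ L, IsLyndon v := by
      intro v hv
      have hvm : v ∈ Mst := by rw [← hLperm]; exact Multiset.mem_coe.mpr hv
      rw [hMst, Multiset.mem_bind] at hvm
      obtain ⟨x, _, hvx⟩ := hvm
      rw [Multiset.eq_of_mem_replicate hvx]
      exact x.2
    have hLchain : L.Chain' (fun a b => b ≤ a) := List.isChain_iff_pairwise.mpr (Multiset.pairwise_sort _ _)
    refine ⟨L.flatten, Set.mem_univ _, ?_⟩
    obtain ⟨h1, h2, h3⟩ := hfact L.flatten
    have hfw : fact L.flatten = L :=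
      LyndonAux.unique _ _ h1 h2 hLmem hLchain (by rw [h3])
    funext v
    show (fact L.flatten).count v.1 = g v
    rw [hfw]
    have hcount : L.count v.1 = Multiset.count v.1 Mst := by
      rw [hbeq, ← hLperm, Multiset.coe_count]
    rw [hcount, hMst, Multiset.count_bind]
    have hmap : S.val.map (fun x => Multiset.count v.1 (Multiset.replicate (g x) x.1))
        = S.val.map (fun x => if x = v then g x else 0) := by
      apply Multiset.map_congr rfl
      intro x _
      simp [Multiset.count_replicate, Subtype.coe_inj]
    rw [hmap]
    have hsum : (S.val.map fun x => if x = v then g x else 0).sum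
        = ∑ x ∈ S, if x = v then g x else 0 := rfl
    rw [hsum, Finset.sum_ite_eq']
    by_cases hv : v ∈ S
    · simp [hv]
    · have hg0 : g v = 0 := by
        by_contra h0
        exact hv (by rw [hS, Set.Finite.mem_toFinset]; exact h0)
      simp [hv, hg0]
end
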